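/- arXiv:1211.7084 — 8 statements merged into one kernel-verified Lean document; each statement's English description precedes it below -/
import Mathlib

section
/- There exists exactly one admissible vector v* ∈ ℝ^d; moreover the function L̂ attains its global minimum at a unique point, and this unique minimizer coincides with v*. (Theorem 1 of the paper, finite-index case: uniqueness of the admissible velocity.) -/
/-!
At an admissible `v`, the gradient `∇L(v)` is a convex combination of active momenta, hence a
supergradient of the concave envelope `Φ` at `v`; together with the strict first-order inequality
`L(w) > L(v) + ⟪∇L(v), w - v⟫` this makes `v` a strict global minimizer of `L̂ = L - Φ`.
Conversely, at a minimizer `v` of `L̂`, a direction `u` separating `∇L(v)` from the hull of the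
active momenta would make `L` decrease faster than `Φ` along `v + t u` for small `t > 0`.
Superlinear `L` beats the Lipschitz `Φ`, so `L̂` is coercive and has a minimizer; strictness makes
both the minimizer and the admissible point unique.
-/

open scoped InnerProductSpace

noncomputable section

/-- The lower envelope `Φ(v) = min_{i∈𝕀} (−H_i + ⟨p_i, v⟩)`. -/
def lowerEnv {d : ℕ} {ι : Type} [Fintype ι] [Nonempty ι]
    (p : ι → EuclideanSpace ℝ (Fin d)) (H : ι → ℝ)
    (v : EuclideanSpace ℝ (Fin d)) : ℝ :=
  Finset.univ.inf' Finset.univ_nonempty fun i => -H i + ⟪p i, v⟫_ℝ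

/-- The set `I(v)` of indices where the minimum defining `Φ(v)` is attained. -/
def activeSet {d : ℕ} {ι : Type} [Fintype ι] [Nonempty ι]
    (p : ι → EuclideanSpace ℝ (Fin d)) (H : ι → ℝ)
    (v : EuclideanSpace ℝ (Fin d)) : Set ι :=
  {j | -H j + ⟪p j, v⟫_ℝ = lowerEnv p H v}

/-- `v` is admissible if `∇L(v)` lies in the convex hull of the active momenta. -/
def IsAdmissible {d : ℕ} {ι : Type} [Fintype ι] [Nonempty ι]
    (L : EuclideanSpace ℝ (Fin d) → ℝ)
    (p : ι → EuclideanSpace ℝ (Fin d)) (H : ι → ℝ)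
    (v : EuclideanSpace ℝ (Fin d)) : Prop :=
  gradient L v ∈ convexHull ℝ (p '' activeSet p H v)

open Filter Topology Set

theorem ConvexOn.comp_add_smul {E : Type*} [AddCommGroup E] [Module ℝ E] {f : E → ℝ}
    (hf : ConvexOn ℝ univ f) (v u : E) :
    ConvexOn ℝ univ (fun t : ℝ => f (v + t • u)) := by
  have hline : (fun t : ℝ => f (v + t • u)) = f ∘ AffineMap.lineMap v (v + u) := by
    ext t
    simp [AffineMap.lineMap_apply_module', add_comm]
  rw [hline]
  exact hf.comp_affineMap _

section InnerProductSpace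

variable {E : Type*} [NormedAddCommGroup E] [InnerProductSpace ℝ E] [CompleteSpace E]
  {f : E → ℝ} {v : E}

theorem hasDerivAt_comp_add_smul_zero (hf : DifferentiableAt ℝ f v) (u : E) :
    HasDerivAt (fun t : ℝ => f (v + t • u)) ⟪gradient f v, u⟫_ℝ 0 := by
  have hline : HasDerivAt (fun t : ℝ => v + t • u) u 0 := by
    simpa using ((hasDerivAt_id (0 : ℝ)).smul_const u).const_add v
  have hf' :
      HasFDerivAt f (InnerProductSpace.toDual ℝ E (gradient f v)) (v + (0 : ℝ) • u) := by
    simpa using hf.hasGradientAt.hasFDerivAt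
  exact hf'.comp_hasDerivAt 0 hline

theorem ConvexOn.add_inner_gradient_le (hf : ConvexOn ℝ univ f) (hd : DifferentiableAt ℝ f v)
    (w : E) : f v + ⟪gradient f v, w - v⟫_ℝ ≤ f w := by
  have hslope := (hf.comp_add_smul v (w - v)).le_slope_of_hasDerivAt (mem_univ 0) (mem_univ 1)
    one_pos (hasDerivAt_comp_add_smul_zero hd (w - v))
  simp only [slope_def_field, zero_smul, add_zero, one_smul, add_sub_cancel, sub_zero,
    div_one] at hslope
  linarith

theorem StrictConvexOn.add_inner_gradient_lt (hf : StrictConvexOn ℝ univ f)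
    (hd : DifferentiableAt ℝ f v) {w : E} (hvw : v ≠ w) :
    f v + ⟪gradient f v, w - v⟫_ℝ < f w := by
  -- strictness comes from the midpoint: apply the non-strict inequality towards it
  have hmid := hf.2 (mem_univ v) (mem_univ w) hvw (by norm_num : (0 : ℝ) < 1 / 2)
    (by norm_num : (0 : ℝ) < 1 / 2) (by norm_num)
  have hle := hf.convexOn.add_inner_gradient_le hd ((1 / 2 : ℝ) • v + (1 / 2 : ℝ) • w)
  have hsub : (1 / 2 : ℝ) • v + (1 / 2 : ℝ) • w - v = (1 / 2 : ℝ) • (w - v) := by module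
  rw [hsub, real_inner_smul_right] at hle
  simp only [smul_eq_mul] at hmid
  linarith

theorem eventually_lt_add_mul_of_inner_gradient_lt (hd : DifferentiableAt ℝ f v) {u : E}
    {c : ℝ} (hc : ⟪gradient f v, u⟫_ℝ < c) :
    ∀ᶠ t in 𝓝[>] (0 : ℝ), f (v + t • u) < f v + t * c := by
  filter_upwards [(hasDerivAt_comp_add_smul_zero hd u).hasDerivWithinAt.limsup_slope_le'
    self_notMem_Ioi hc, self_mem_nhdsWithin] with t hslope (ht : 0 < t)
  rw [slope_def_field, zero_smul, add_zero, sub_zero, div_lt_iff₀ ht] at hslope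
  linarith

theorem geometric_hahn_banach_point_closed_inner {K : Set E} (hK : Convex ℝ K)
    (hKc : IsClosed K) {g : E} (hg : g ∉ K) :
    ∃ u : E, ∃ c : ℝ, ⟪g, u⟫_ℝ < c ∧ ∀ q ∈ K, c < ⟪q, u⟫_ℝ := by
  obtain ⟨φ, c, hφg, hφK⟩ := geometric_hahn_banach_point_closed hK hKc hg
  have hφ (x : E) : ⟪x, (InnerProductSpace.toDual ℝ E).symm φ⟫_ℝ = φ x := by
    rw [real_inner_comm, InnerProductSpace.toDual_symm_apply]
  exact ⟨_, c, by rwa [hφ], fun q hq => by rw [hφ]; exact hφK q hq⟩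

end InnerProductSpace

theorem tendsto_sub_atTop_of_superlinear {E : Type*} [NormedAddCommGroup E] {f g : E → ℝ}
    {a b : ℝ} (hf : Tendsto (fun v => f v / ‖v‖) (comap norm atTop) atTop)
    (hg : ∀ v, g v ≤ a + b * ‖v‖) :
    Tendsto (fun v => f v - g v) (comap norm atTop) atTop := by
  have hnorm : Tendsto (fun v : E => ‖v‖) (comap norm atTop) atTop := tendsto_comap
  have hlower : Tendsto (fun v => ‖v‖ * (f v / ‖v‖ + -b) + -a) (comap norm atTop) atTop :=
    tendsto_atTop_add_const_right _ _
      (hnorm.atTop_mul_atTop₀ (tendsto_atTop_add_const_right _ _ hf))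
  refine tendsto_atTop_mono' _ ?_ hlower
  filter_upwards [hnorm.eventually_gt_atTop 0] with v hv
  rw [mul_add, mul_div_cancel₀ _ hv.ne']
  linarith [hg v]

section LowerEnvelope

variable {d : ℕ} {ι : Type} [Fintype ι] [Nonempty ι]
  (p : ι → EuclideanSpace ℝ (Fin d)) (H : ι → ℝ)

theorem lowerEnv_le (v : EuclideanSpace ℝ (Fin d)) (j : ι) :
    lowerEnv p H v ≤ -H j + ⟪p j, v⟫_ℝ :=
  Finset.inf'_le _ (Finset.mem_univ j)

theorem lowerEnv_le_add_mul_norm (i : ι) (v : EuclideanSpace ℝ (Fin d)) :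
    lowerEnv p H v ≤ -H i + ‖p i‖ * ‖v‖ := by
  linarith [lowerEnv_le p H v i, real_inner_le_norm (p i) v]

theorem continuous_lowerEnv : Continuous (lowerEnv p H) :=
  Continuous.finset_inf'_apply _ fun _ _ =>
    continuous_const.add (continuous_const.inner continuous_id)

variable {p H}

theorem lowerEnv_sub_le_inner {v q : EuclideanSpace ℝ (Fin d)}
    (hq : q ∈ convexHull ℝ (p '' activeSet p H v)) (w : EuclideanSpace ℝ (Fin d)) :
    lowerEnv p H w - lowerEnv p H v ≤ ⟪q, w - v⟫_ℝ := by
  have hhalf : Convex ℝ {q | lowerEnv p H w - lowerEnv p H v ≤ ⟪q, w - v⟫_ℝ} :=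
    convex_halfSpace_ge ⟨fun a b => inner_add_left a b _, fun c a => real_inner_smul_left a _ c⟩ _
  refine convexHull_min ?_ hhalf hq
  rintro _ ⟨j, hj : _ = _, rfl⟩
  simp only [mem_ofPred_eq, inner_sub_right]
  linarith [lowerEnv_le p H w j]

theorem eventually_add_mul_le_lowerEnv {v u : EuclideanSpace ℝ (Fin d)} {c : ℝ}
    (hc : ∀ j ∈ activeSet p H v, c < ⟪p j, u⟫_ℝ) :
    ∀ᶠ t in 𝓝[>] (0 : ℝ), lowerEnv p H v + t * c ≤ lowerEnv p H (v + t • u) := by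
  have hall : ∀ j, ∀ᶠ t in 𝓝[>] (0 : ℝ),
      lowerEnv p H v + t * c ≤ -H j + ⟪p j, v⟫_ℝ + t * ⟪p j, u⟫_ℝ := by
    intro j
    by_cases hj : j ∈ activeSet p H v
    · filter_upwards [self_mem_nhdsWithin] with t (ht : 0 < t)
      rw [show -H j + ⟪p j, v⟫_ℝ = lowerEnv p H v from hj]
      nlinarith [hc j hj]
    · have hgap : lowerEnv p H v < -H j + ⟪p j, v⟫_ℝ :=
        (lowerEnv_le p H v j).lt_of_ne (Ne.symm hj)
      have hcont : Continuous fun t : ℝ =>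
          -H j + ⟪p j, v⟫_ℝ + t * ⟪p j, u⟫_ℝ - (lowerEnv p H v + t * c) := by fun_prop
      have hpos := (hcont.tendsto 0).eventually
        (lt_mem_nhds (by simp only [zero_mul, add_zero]; linarith : (0 : ℝ) < _))
      filter_upwards [nhdsWithin_le_nhds hpos] with t ht
      linarith
  filter_upwards [eventually_all.2 hall] with t ht
  refine Finset.le_inf' _ _ fun j _ => ?_
  rw [inner_add_right, real_inner_smul_right]
  linarith [ht j]

end LowerEnvelope

section Admissible

variable {d : ℕ} {ι : Type} [Fintype ι] [Nonempty ι] {L : EuclideanSpace ℝ (Fin d) → ℝ}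
  {p : ι → EuclideanSpace ℝ (Fin d)} {H : ι → ℝ} {v : EuclideanSpace ℝ (Fin d)}

theorem IsAdmissible.lt_of_ne (hadm : IsAdmissible L p H v) (hconv : StrictConvexOn ℝ univ L)
    (hd : DifferentiableAt ℝ L v) {w : EuclideanSpace ℝ (Fin d)} (hw : w ≠ v) :
    L v - lowerEnv p H v < L w - lowerEnv p H w := by
  linarith [lowerEnv_sub_le_inner hadm w, hconv.add_inner_gradient_lt hd (Ne.symm hw)]

theorem isAdmissible_of_forall_le (hd : DifferentiableAt ℝ L v)
    (hmin : ∀ w, L v - lowerEnv p H v ≤ L w - lowerEnv p H w) : IsAdmissible L p H v := by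
  by_contra hout
  have hclosed : IsClosed (convexHull ℝ (p '' activeSet p H v)) :=
    ((toFinite _).image p).isCompact_convexHull ℝ |>.isClosed
  obtain ⟨u, c, hgrad, hactive⟩ :=
    geometric_hahn_banach_point_closed_inner (convex_convexHull ℝ _) hclosed hout
  have hc : ∀ j ∈ activeSet p H v, c < ⟪p j, u⟫_ℝ := fun j hj =>
    hactive _ (subset_convexHull ℝ _ (mem_image_of_mem p hj))
  obtain ⟨t, hL, hΦ⟩ := ((eventually_lt_add_mul_of_inner_gradient_lt hd hgrad).and
    (eventually_add_mul_le_lowerEnv hc)).exists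
  linarith [hmin (v + t • u)]

end Admissible

theorem unique_admissible_velocity_general {d : ℕ}
    {ι : Type} [Fintype ι] [Nonempty ι]
    (L : EuclideanSpace ℝ (Fin d) → ℝ)
    (hdiff : Differentiable ℝ L)
    (hconv : StrictConvexOn ℝ Set.univ L)
    (hsuper : Filter.Tendsto (fun v => L v / ‖v‖)
      (Filter.comap (fun v : EuclideanSpace ℝ (Fin d) => ‖v‖) Filter.atTop) Filter.atTop)
    (p : ι → EuclideanSpace ℝ (Fin d)) (H : ι → ℝ) :
    ∃ vstar : EuclideanSpace ℝ (Fin d),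
      IsAdmissible L p H vstar ∧
      (∀ v, IsAdmissible L p H v → v = vstar) ∧
      (∀ v, v ≠ vstar →
        L vstar - lowerEnv p H vstar < L v - lowerEnv p H v) := by
  obtain ⟨i⟩ := ‹Nonempty ι›
  have hcoercive : Tendsto (fun v => L v - lowerEnv p H v) (cocompact _) atTop := by
    rw [← Metric.cobounded_eq_cocompact, ← comap_norm_atTop]
    exact tendsto_sub_atTop_of_superlinear hsuper (lowerEnv_le_add_mul_norm p H i)
  obtain ⟨vstar, hmin⟩ :=
    (hdiff.continuous.sub (continuous_lowerEnv p H)).exists_forall_le hcoercive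
  have hadm : IsAdmissible L p H vstar := isAdmissible_of_forall_le (hdiff vstar) hmin
  refine ⟨vstar, hadm, fun v hv => ?_, fun v hv => hadm.lt_of_ne hconv (hdiff vstar) hv⟩
  by_contra hne
  exact lt_asymm (hadm.lt_of_ne hconv (hdiff vstar) hne)
    (hv.lt_of_ne hconv (hdiff v) (Ne.symm hne))

/-- Theorem 1 (finite case): there is exactly one admissible velocity, and it is the
unique global minimizer of `L̂(v) = L(v) − Φ(v)`. -/
theorem unique_admissible_velocity {d : ℕ} (hd : 1 ≤ d)
    {ι : Type} [Fintype ι] [Nonempty ι]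
    (L : EuclideanSpace ℝ (Fin d) → ℝ)
    (hdiff : Differentiable ℝ L)
    (hconv : StrictConvexOn ℝ Set.univ L)
    (hsuper : Filter.Tendsto (fun v => L v / ‖v‖)
      (Filter.comap (fun v : EuclideanSpace ℝ (Fin d) => ‖v‖) Filter.atTop) Filter.atTop)
    (p : ι → EuclideanSpace ℝ (Fin d)) (H : ι → ℝ) :
    ∃ vstar : EuclideanSpace ℝ (Fin d),
      IsAdmissible L p H vstar ∧
      (∀ v, IsAdmissible L p H v → v = vstar) ∧
      (∀ v, v ≠ vstar →
        L vstar - lowerEnv p H vstar < L v - lowerEnv p H v) :=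
  unique_admissible_velocity_general L hdiff hconv hsuper p H
end
end

section
/- If v* is a point of global minimum of L̂, then v* is admissible, i.e. ∇L(v*) belongs to the convex hull of {p_j : j ∈ I(v*)}. -/
open scoped InnerProductSpace

noncomputable section

/-!
Along a ray `v* + t u`, `t ↓ 0`, the inactive affine pieces of the lower envelope `Φ` stay
strictly above the active ones, so `Φ(v* + t u) ≥ Φ(v*) + t c` as soon as `c ≤ ⟪p j, u⟫` for
all active `j`. Minimality of `L − Φ` at `v*` turns this into `c ≤ ⟪∇L(v*), u⟫`. If `∇L(v*)`
were outside the convex hull of the active `p j`, a separating hyperplane would provide `u`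
and `c` with `⟪∇L(v*), u⟫ < c ≤ ⟪p j, u⟫` for all active `j`, a contradiction.
-/

open Filter Set Topology

theorem geometric_hahn_banach_point_closed_inner_s2 {E : Type*} [NormedAddCommGroup E]
    [InnerProductSpace ℝ E] [CompleteSpace E] {s : Set E} {x : E}
    (hconv : Convex ℝ s) (hclosed : IsClosed s) (hx : x ∉ s) :
    ∃ (u : E) (c : ℝ), ⟪x, u⟫_ℝ < c ∧ ∀ y ∈ s, c < ⟪y, u⟫_ℝ := by
  obtain ⟨f, c, hfx, hfs⟩ := geometric_hahn_banach_point_closed hconv hclosed hx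
  have hf : ∀ y, ⟪y, (InnerProductSpace.toDual ℝ E).symm f⟫_ℝ = f y := fun y => by
    rw [real_inner_comm, InnerProductSpace.toDual_symm_apply]
  exact ⟨_, c, by rwa [hf], fun y hy => by rw [hf]; exact hfs y hy⟩

theorem le_of_hasDerivWithinAt_Ici_of_eventually_le {f : ℝ → ℝ} {f' m x : ℝ}
    (hf : HasDerivWithinAt f f' (Ici x) x)
    (hm : ∀ᶠ t in 𝓝[>] x, f x + (t - x) * m ≤ f t) : m ≤ f' := by
  have hslope : ∀ᶠ t in 𝓝[>] x, m ≤ slope f x t := by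
    filter_upwards [hm, self_mem_nhdsWithin] with t ht hxt
    rw [slope_def_field, le_div_iff₀ (sub_pos.mpr hxt)]
    linarith
  have hlim : Tendsto (slope f x) (𝓝[>] x) (𝓝 f') :=
    (hasDerivWithinAt_iff_tendsto_slope' (lt_irrefl x)).mp hf.Ioi_of_Ici
  exact ge_of_tendsto hlim hslope

theorem eventually_lowerEnv_add_smul_ge {d : ℕ} {ι : Type} [Fintype ι] [Nonempty ι]
    (p : ι → EuclideanSpace ℝ (Fin d)) (H : ι → ℝ) (v u : EuclideanSpace ℝ (Fin d)) {c : ℝ}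
    (hc : ∀ j ∈ activeSet p H v, c ≤ ⟪p j, u⟫_ℝ) :
    ∀ᶠ t in 𝓝[>] (0 : ℝ), lowerEnv p H v + t * c ≤ lowerEnv p H (v + t • u) := by
  have hpiece : ∀ i, ∀ᶠ t in 𝓝[>] (0 : ℝ),
      lowerEnv p H v + t * c ≤ (-H i + ⟪p i, v⟫_ℝ) + t * ⟪p i, u⟫_ℝ := by
    intro i
    have hle : lowerEnv p H v ≤ -H i + ⟪p i, v⟫_ℝ := Finset.inf'_le _ (Finset.mem_univ i)
    rcases hle.eq_or_lt with hactive | hinactive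
    · filter_upwards [self_mem_nhdsWithin] with t (ht : 0 < t)
      rw [← hactive]
      gcongr
      exact hc i hactive.symm
    · have hnear : ∀ᶠ t in 𝓝 (0 : ℝ),
          lowerEnv p H v + t * c < (-H i + ⟪p i, v⟫_ℝ) + t * ⟪p i, u⟫_ℝ :=
        ContinuousAt.eventually_lt (by fun_prop) (by fun_prop) (by simpa using hinactive)
      exact (hnear.filter_mono nhdsWithin_le_nhds).mono fun t => le_of_lt
  filter_upwards [eventually_all.mpr hpiece] with t ht
  refine Finset.le_inf' _ _ fun i _ => ?_
  rw [inner_add_right, real_inner_smul_right, ← add_assoc]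
  exact ht i

theorem le_inner_gradient_of_isMin_sub_lowerEnv {d : ℕ} {ι : Type} [Fintype ι] [Nonempty ι]
    {L : EuclideanSpace ℝ (Fin d) → ℝ} {p : ι → EuclideanSpace ℝ (Fin d)} {H : ι → ℝ}
    {v : EuclideanSpace ℝ (Fin d)} (hL : DifferentiableAt ℝ L v)
    (hmin : IsMinOn (fun w => L w - lowerEnv p H w) univ v)
    (u : EuclideanSpace ℝ (Fin d)) {c : ℝ} (hc : ∀ j ∈ activeSet p H v, c ≤ ⟪p j, u⟫_ℝ) :
    c ≤ ⟪gradient L v, u⟫_ℝ := by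
  have hderiv : HasDerivAt (fun t : ℝ => L (v + t • u)) ⟪gradient L v, u⟫_ℝ 0 := by
    rw [gradient, InnerProductSpace.toDual_symm_apply]
    exact hL.hasFDerivAt.hasLineDerivAt u
  refine le_of_hasDerivWithinAt_Ici_of_eventually_le hderiv.hasDerivWithinAt ?_
  filter_upwards [eventually_lowerEnv_add_smul_ge p H v u hc] with t ht
  have := isMinOn_univ_iff.mp hmin (v + t • u)
  simp only [zero_smul, add_zero, sub_zero]
  linarith

theorem min_of_Lhat_isAdmissible_general {d : ℕ}
    {ι : Type} [Fintype ι] [Nonempty ι]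
    (L : EuclideanSpace ℝ (Fin d) → ℝ)
    (hdiff : Differentiable ℝ L)
    (p : ι → EuclideanSpace ℝ (Fin d)) (H : ι → ℝ)
    (vstar : EuclideanSpace ℝ (Fin d))
    (hmin : ∀ v, L vstar - lowerEnv p H vstar ≤ L v - lowerEnv p H v) :
    IsAdmissible L p H vstar := by
  by_contra hnot
  obtain ⟨u, c, hgrad, hhull⟩ := geometric_hahn_banach_point_closed_inner_s2
    (convex_convexHull ℝ _) (((Set.toFinite _).image p).isClosed_convexHull (𝕜 := ℝ)) hnot
  have hactive : ∀ j ∈ activeSet p H vstar, c ≤ ⟪p j, u⟫_ℝ := fun j hj =>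
    (hhull _ (subset_convexHull ℝ _ ⟨j, hj, rfl⟩)).le
  exact (le_inner_gradient_of_isMin_sub_lowerEnv (hdiff vstar) (isMinOn_univ_iff.mpr hmin) u
    hactive).not_gt hgrad

/-- A point of global minimum of `L̂(v) = L(v) − Φ(v)` is admissible. -/
theorem min_of_Lhat_isAdmissible {d : ℕ} (hd : 1 ≤ d)
    {ι : Type} [Fintype ι] [Nonempty ι]
    (L : EuclideanSpace ℝ (Fin d) → ℝ)
    (hdiff : Differentiable ℝ L)
    (hconv : StrictConvexOn ℝ Set.univ L)
    (hsuper : Filter.Tendsto (fun v => L v / ‖v‖)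
      (Filter.comap (fun v : EuclideanSpace ℝ (Fin d) => ‖v‖) Filter.atTop) Filter.atTop)
    (p : ι → EuclideanSpace ℝ (Fin d)) (H : ι → ℝ)
    (vstar : EuclideanSpace ℝ (Fin d))
    (hmin : ∀ v, L vstar - lowerEnv p H vstar ≤ L v - lowerEnv p H v) :
    IsAdmissible L p H vstar :=
  min_of_Lhat_isAdmissible_general L hdiff p H vstar hmin
end
end

section
/- If v̂ is admissible, then v̂ is a point of strict global minimum of L̂: for every h ∈ ℝ^d with h ≠ 0 one has L̂(v̂ + h) > L̂(v̂). -/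
/-!
`L̂ = L - Φ` with `Φ = lowerEnv p H` concave. Every convex combination `q` of the momenta active
at `v̂` is a supergradient of `Φ` at `v̂`, while a strictly convex `L` lies strictly above its
tangent plane. For `q = ∇L(v̂)` this gives
`L(v̂ + h) > L(v̂) + ⟪q, h⟫ ≥ L(v̂) + Φ(v̂ + h) - Φ(v̂)` for `h ≠ 0`.
-/

open scoped InnerProductSpace

noncomputable section

open Set

theorem StrictConvexOn.comp_affineMap_of_injective {𝕜 E F β : Type*} [Ring 𝕜] [PartialOrder 𝕜]
    [AddCommGroup E] [AddCommGroup F] [Module 𝕜 E] [Module 𝕜 F]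
    [AddCommMonoid β] [PartialOrder β] [SMul 𝕜 β] {f : F → β} {s : Set F}
    (g : E →ᵃ[𝕜] F) (hg : Function.Injective g) (hf : StrictConvexOn 𝕜 s f) :
    StrictConvexOn 𝕜 (g ⁻¹' s) (f ∘ g) :=
  ⟨hf.1.affine_preimage g, fun x hx y hy hxy a b ha hb hab =>
    calc
      (f ∘ g) (a • x + b • y) = f (a • g x + b • g y) := by
        rw [Function.comp_apply, Convex.combo_affine_apply hab]
      _ < a • f (g x) + b • f (g y) := hf.2 hx hy (hg.ne hxy) ha hb hab⟩

theorem StrictConvexOn.add_lt_of_hasFDerivAt {E : Type*} [NormedAddCommGroup E]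
    [NormedSpace ℝ E] {f : E → ℝ} {f' : E →L[ℝ] ℝ} {s : Set E} {x h : E}
    (hf : StrictConvexOn ℝ s f) (hx : x ∈ s) (hxh : x + h ∈ s) (hh : h ≠ 0)
    (hf' : HasFDerivAt f f' x) : f x + f' h < f (x + h) := by
  set line : ℝ →ᵃ[ℝ] E := AffineMap.lineMap x (x + h)
  have hline : ∀ t : ℝ, line t = x + t • h := fun t => by
    rw [AffineMap.lineMap_apply_module', add_sub_cancel_left, add_comm]
  have hconv : StrictConvexOn ℝ (line ⁻¹' s) (f ∘ line) :=
    hf.comp_affineMap_of_injective line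
      (AffineMap.lineMap_injective ℝ (by simpa [eq_comm] using hh))
  have hderiv : HasDerivAt (f ∘ line) (f' h) 0 := by
    have hlineDeriv : HasDerivAt line h 0 := by
      simpa [funext hline] using ((hasDerivAt_id (0 : ℝ)).smul_const h).const_add x
    exact (by simpa [hline] using hf' : HasFDerivAt f f' (line 0)).comp_hasDerivAt 0 hlineDeriv
  have hslope := hconv.lt_slope_of_hasDerivAt (by simpa [hline] using hx)
    (by simpa [hline] using hxh) zero_lt_one hderiv
  simp only [slope_def_field, Function.comp_apply, hline, zero_smul, add_zero, one_smul,
    sub_zero, div_one] at hslope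
  linarith

section LowerEnvelope

variable {d : ℕ} {ι : Type} [Fintype ι] [Nonempty ι]
  {p : ι → EuclideanSpace ℝ (Fin d)} {H : ι → ℝ} {v : EuclideanSpace ℝ (Fin d)}

theorem lowerEnv_add_le_of_mem_activeSet {j : ι} (hj : j ∈ activeSet p H v)
    (h : EuclideanSpace ℝ (Fin d)) : lowerEnv p H (v + h) ≤ lowerEnv p H v + ⟪p j, h⟫_ℝ :=
  calc lowerEnv p H (v + h) ≤ -H j + ⟪p j, v + h⟫_ℝ := Finset.inf'_le _ (Finset.mem_univ j)
    _ = lowerEnv p H v + ⟪p j, h⟫_ℝ := by rw [inner_add_right, ← hj.out]; ring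

theorem lowerEnv_add_le_of_mem_convexHull {q : EuclideanSpace ℝ (Fin d)}
    (hq : q ∈ convexHull ℝ (p '' activeSet p H v)) (h : EuclideanSpace ℝ (Fin d)) :
    lowerEnv p H (v + h) ≤ lowerEnv p H v + ⟪q, h⟫_ℝ := by
  have hsub : convexHull ℝ (p '' activeSet p H v) ⊆
      {w | lowerEnv p H (v + h) - lowerEnv p H v ≤ ⟪w, h⟫_ℝ} := by
    refine convexHull_min ?_ (convex_halfSpace_ge ((innerₛₗ ℝ).flip h).isLinear _)
    rintro - ⟨j, hj, rfl⟩
    exact sub_le_iff_le_add'.mpr (lowerEnv_add_le_of_mem_activeSet hj h)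
  linarith [(hsub hq).out]

end LowerEnvelope

theorem isAdmissible_strict_min_general {d : ℕ}
    {ι : Type} [Fintype ι] [Nonempty ι]
    (L : EuclideanSpace ℝ (Fin d) → ℝ)
    (hdiff : Differentiable ℝ L)
    (hconv : StrictConvexOn ℝ Set.univ L)
    (p : ι → EuclideanSpace ℝ (Fin d)) (H : ι → ℝ)
    (vhat : EuclideanSpace ℝ (Fin d))
    (hadm : IsAdmissible L p H vhat) :
    ∀ h : EuclideanSpace ℝ (Fin d), h ≠ 0 →
      L vhat - lowerEnv p H vhat < L (vhat + h) - lowerEnv p H (vhat + h) := by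
  intro h hh
  have hΦ := lowerEnv_add_le_of_mem_convexHull hadm h
  have hL := hconv.add_lt_of_hasFDerivAt (mem_univ _) (mem_univ _) hh
    (hasGradientAt_iff_hasFDerivAt.mp (hdiff vhat).hasGradientAt)
  rw [InnerProductSpace.toDual_apply_apply] at hL
  linarith

/-- An admissible point is a strict global minimizer of `L̂(v) = L(v) − Φ(v)`. -/
theorem isAdmissible_strict_min {d : ℕ} (hd : 1 ≤ d)
    {ι : Type} [Fintype ι] [Nonempty ι]
    (L : EuclideanSpace ℝ (Fin d) → ℝ)
    (hdiff : Differentiable ℝ L)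
    (hconv : StrictConvexOn ℝ Set.univ L)
    (hsuper : Filter.Tendsto (fun v => L v / ‖v‖)
      (Filter.comap (fun v : EuclideanSpace ℝ (Fin d) => ‖v‖) Filter.atTop) Filter.atTop)
    (p : ι → EuclideanSpace ℝ (Fin d)) (H : ι → ℝ)
    (vhat : EuclideanSpace ℝ (Fin d))
    (hadm : IsAdmissible L p H vhat) :
    ∀ h : EuclideanSpace ℝ (Fin d), h ≠ 0 →
      L vhat - lowerEnv p H vhat < L (vhat + h) - lowerEnv p H (vhat + h) :=
  isAdmissible_strict_min_general L hdiff hconv p H vhat hadm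
end
end

section
/- Let K ⊂ ℝ × ℝ^d be a nonempty compact convex set of points written (s, p), let H : ℝ^d → ℝ be differentiable and strictly convex, let v̄ ∈ ℝ^d and p̄ ∈ ℝ^d satisfy ∇H(p̄) = v̄. Set Φ̄ = min_{(s,p)∈K}(s + ⟨p, v̄⟩) and let S̄ = {(s,p) ∈ K : s + ⟨p, v̄⟩ = Φ̄} be the corresponding face. If p̄ does not belong to the projection {p : ∃s, (s,p) ∈ S̄} of S̄ to the p-coordinate, then M := min_{(s,p)∈K} [ s + ⟨p, v̄⟩ − Φ̄ + ⟨p − p̄, ∇H(p) − v̄⟩ ] > 0. (Lemma 2 of the paper.) -/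
/-!
Both summands `s + ⟨p, v̄⟩ − Φ̄` and `⟨p − p̄, ∇H(p) − ∇H(p̄)⟩` are nonnegative on `K`, the second
one vanishing only at `p = p̄` by strict monotonicity of the gradient of a strictly convex function.
They cannot vanish together, since then `(s, p̄)` would lie in the face `S̄`. So the sum is positive
on `K`, and it attains its minimum there because it is lower semicontinuous: `∇H` need not be
continuous, but `⟨∇H(p), p − p̄⟩` is the limit from below, as `τ ↓ 0`, of the continuous difference
quotients `(H(p) − H(p − τ (p − p̄))) / τ`.
-/

open scoped InnerProductSpace
open Set Filter Topology

theorem lowerSemicontinuous_of_tendsto_of_le {X ι β : Type*} [TopologicalSpace X]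
    [LinearOrder β] [TopologicalSpace β] [OrderTopology β] {l : Filter ι} [l.NeBot]
    {f : X → β} {g : ι → X → β} (hg : ∀ i, Continuous (g i)) (hle : ∀ᶠ i in l, ∀ x, g i x ≤ f x)
    (hlim : ∀ x, Tendsto (fun i => g i x) l (𝓝 (f x))) :
    LowerSemicontinuous f := by
  intro x c hc
  have hci : ∀ᶠ i in l, c < g i x := hlim x (Ioi_mem_nhds hc)
  obtain ⟨i, hci, hgi⟩ := (hci.and hle).exists
  filter_upwards [(isOpen_lt continuous_const (hg i)).mem_nhds hci] with y hy
  exact hy.trans_le (hgi y)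

section FirstOrder

variable {E : Type*} [NormedAddCommGroup E] [NormedSpace ℝ E] {s : Set E} {H : E → ℝ} {x y : E}

theorem ConvexOn.fderiv_sub_le (hH : ConvexOn ℝ s H) (hx : x ∈ s) (hy : y ∈ s)
    (hd : DifferentiableAt ℝ H x) : fderiv ℝ H x (y - x) ≤ H y - H x := by
  have hline : HasDerivAt (H ∘ AffineMap.lineMap (k := ℝ) x y) (fderiv ℝ H x (y - x)) 0 :=
    hd.hasFDerivAt.comp_hasDerivAt_of_eq 0 AffineMap.hasDerivAt_lineMap
      (AffineMap.lineMap_apply_zero x y).symm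
  have := (hH.comp_affineMap (AffineMap.lineMap x y)).le_slope_of_hasDerivAt
    (by simpa using hx) (by simpa using hy) zero_lt_one hline
  simpa [slope_def_field] using this

theorem StrictConvexOn.fderiv_sub_lt (hH : StrictConvexOn ℝ s H) (hx : x ∈ s) (hy : y ∈ s)
    (hxy : x ≠ y) (hd : DifferentiableAt ℝ H x) : fderiv ℝ H x (y - x) < H y - H x := by
  set m : E := (1 / 2 : ℝ) • x + (1 / 2 : ℝ) • y
  have hm : m ∈ s := hH.1 hx hy (by norm_num) (by norm_num) (by norm_num)
  have hmid : H m < (1 / 2 : ℝ) • H x + (1 / 2 : ℝ) • H y :=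
    hH.2 hx hy hxy (by norm_num) (by norm_num) (by norm_num)
  have hmx : m - x = (1 / 2 : ℝ) • (y - x) := by module
  have := hH.convexOn.fderiv_sub_le hx hm hd
  rw [hmx, map_smul, smul_eq_mul] at this
  rw [smul_eq_mul, smul_eq_mul] at hmid
  linarith

theorem ConvexOn.lowerSemicontinuous_fderiv_apply_sub (hH : ConvexOn ℝ univ H)
    (hd : Differentiable ℝ H) (a : E) :
    LowerSemicontinuous fun p => fderiv ℝ H p (p - a) := by
  set g : ℝ → E → ℝ := fun τ p => (H p - H (p - τ • (p - a))) / τ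
  refine lowerSemicontinuous_of_tendsto_of_le (g := g) (l := 𝓝[>] 0) (fun τ => ?_) ?_ (fun p => ?_)
  · have := hd.continuous
    fun_prop
  · filter_upwards [self_mem_nhdsWithin] with τ (hτ : 0 < τ) p
    have := hH.fderiv_sub_le (mem_univ p) (mem_univ (p - τ • (p - a))) (hd p)
    rw [sub_sub_cancel_left, map_neg, map_smul, smul_eq_mul] at this
    rw [div_le_iff₀ hτ]
    linarith
  · have hline : HasDerivAt (fun τ : ℝ => H (p - τ • (p - a))) (-fderiv ℝ H p (p - a)) 0 := by
      have := ((hasDerivAt_id (0 : ℝ)).smul_const (p - a)).const_sub p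
      have h := (hd p).hasFDerivAt.comp_hasDerivAt_of_eq 0 this (by simp)
      rwa [one_smul, map_neg] at h
    have hslope := (hasDerivAt_iff_tendsto_slope.1 hline).neg.mono_left
      (nhdsWithin_mono 0 fun τ (hτ : τ ∈ Ioi 0) => hτ.ne')
    rw [neg_neg] at hslope
    refine hslope.congr fun τ => ?_
    simp only [g, slope_def_field, sub_zero, zero_smul]
    ring

end FirstOrder

section Gradient

variable {F : Type*} [NormedAddCommGroup F] [InnerProductSpace ℝ F] [CompleteSpace F]
  {s : Set F} {H : F → ℝ} {x y : F}

theorem StrictConvexOn.inner_sub_gradient_sub_pos (hH : StrictConvexOn ℝ s H) (hx : x ∈ s)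
    (hy : y ∈ s) (hxy : x ≠ y) (hdx : DifferentiableAt ℝ H x) (hdy : DifferentiableAt ℝ H y) :
    0 < ⟪y - x, gradient H y - gradient H x⟫_ℝ := by
  have hxy_lt := hH.fderiv_sub_lt hx hy hxy hdx
  have hyx_lt := hH.fderiv_sub_lt hy hx hxy.symm hdy
  rw [← neg_sub y x, map_neg] at hyx_lt
  simp only [inner_sub_right, inner_gradient_right, conj_trivial]
  linarith

theorem ConvexOn.lowerSemicontinuous_inner_sub_gradient_sub (hH : ConvexOn ℝ univ H)
    (hd : Differentiable ℝ H) (a v : F) :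
    LowerSemicontinuous fun p => ⟪p - a, gradient H p - v⟫_ℝ := by
  have hsplit : (fun p => ⟪p - a, gradient H p - v⟫_ℝ) =
      (fun p => fderiv ℝ H p (p - a)) + fun p => -⟪p - a, v⟫_ℝ := by
    funext p
    simp only [Pi.add_apply, inner_sub_right, inner_gradient_right, conj_trivial]
    ring
  rw [hsplit]
  exact (hH.lowerSemicontinuous_fderiv_apply_sub hd a).add
    (by fun_prop : Continuous fun p => -⟪p - a, v⟫_ℝ).lowerSemicontinuous

end Gradient

theorem positive_min_over_superdifferential_general {d : ℕ}
    (K : Set (ℝ × EuclideanSpace ℝ (Fin d)))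
    (hKne : K.Nonempty) (hKcomp : IsCompact K)
    (H : EuclideanSpace ℝ (Fin d) → ℝ)
    (hdiff : Differentiable ℝ H) (hconv : StrictConvexOn ℝ Set.univ H)
    (vbar pbar : EuclideanSpace ℝ (Fin d)) (hgrad : gradient H pbar = vbar)
    (Φbar : ℝ)
    (hΦ : IsLeast ((fun q : ℝ × EuclideanSpace ℝ (Fin d) => q.1 + ⟪q.2, vbar⟫_ℝ) '' K) Φbar)
    (hproj : pbar ∉ Prod.snd '' {q ∈ K | q.1 + ⟪q.2, vbar⟫_ℝ = Φbar}) :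
    ∃ M : ℝ,
      IsLeast ((fun q : ℝ × EuclideanSpace ℝ (Fin d) =>
        q.1 + ⟪q.2, vbar⟫_ℝ - Φbar + ⟪q.2 - pbar, gradient H q.2 - vbar⟫_ℝ) '' K) M ∧
      0 < M := by
  set f := fun q : ℝ × EuclideanSpace ℝ (Fin d) =>
    q.1 + ⟪q.2, vbar⟫_ℝ - Φbar + ⟪q.2 - pbar, gradient H q.2 - vbar⟫_ℝ
  have hlsc : LowerSemicontinuous f :=
    (by fun_prop : Continuous fun q : ℝ × EuclideanSpace ℝ (Fin d) =>
      q.1 + ⟪q.2, vbar⟫_ℝ - Φbar).lowerSemicontinuous.add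
      ((hconv.convexOn.lowerSemicontinuous_inner_sub_gradient_sub hdiff pbar vbar).comp
        continuous_snd)
  obtain ⟨q₀, hq₀, hmin⟩ := (hlsc.lowerSemicontinuousOn K).exists_isMinOn hKne hKcomp
  refine ⟨f q₀, ⟨mem_image_of_mem f hq₀, forall_mem_image.2 hmin⟩, ?_⟩
  have hface : 0 ≤ q₀.1 + ⟪q₀.2, vbar⟫_ℝ - Φbar := sub_nonneg.2 (hΦ.2 (mem_image_of_mem _ hq₀))
  rcases eq_or_ne q₀.2 pbar with hp | hp
  · have hoff : q₀.1 + ⟪q₀.2, vbar⟫_ℝ ≠ Φbar := fun h => hproj ⟨q₀, ⟨hq₀, h⟩, hp⟩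
    have hzero : ⟪q₀.2 - pbar, gradient H q₀.2 - vbar⟫_ℝ = 0 := by
      rw [hp, sub_self, inner_zero_left]
    change 0 < _ + _
    rw [hzero, add_zero]
    exact hface.lt_of_ne (sub_ne_zero.2 hoff).symm
  · have hmono := hconv.inner_sub_gradient_sub_pos (mem_univ _) (mem_univ _) hp.symm
      (hdiff pbar) (hdiff q₀.2)
    exact add_pos_of_nonneg_of_pos hface (hgrad ▸ hmono)

/-- Lemma 2 of the paper: if `p̄` is not in the `p`-projection of the face `S̄` of `K`
supported by the direction `v̄ = ∇H(p̄)`, then the minimum `M` over `K` of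
`s + ⟨p, v̄⟩ − Φ̄ + ⟨p − p̄, ∇H(p) − v̄⟩` exists and is strictly positive. -/
theorem positive_min_over_superdifferential {d : ℕ}
    (K : Set (ℝ × EuclideanSpace ℝ (Fin d)))
    (hKne : K.Nonempty) (hKcomp : IsCompact K) (hKconv : Convex ℝ K)
    (H : EuclideanSpace ℝ (Fin d) → ℝ)
    (hdiff : Differentiable ℝ H) (hconv : StrictConvexOn ℝ Set.univ H)
    (vbar pbar : EuclideanSpace ℝ (Fin d)) (hgrad : gradient H pbar = vbar)
    (Φbar : ℝ)
    (hΦ : IsLeast ((fun q : ℝ × EuclideanSpace ℝ (Fin d) => q.1 + ⟪q.2, vbar⟫_ℝ) '' K) Φbar)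
    (hproj : pbar ∉ Prod.snd '' {q ∈ K | q.1 + ⟪q.2, vbar⟫_ℝ = Φbar}) :
    ∃ M : ℝ,
      IsLeast ((fun q : ℝ × EuclideanSpace ℝ (Fin d) =>
        q.1 + ⟪q.2, vbar⟫_ℝ - Φbar + ⟪q.2 - pbar, gradient H q.2 - vbar⟫_ℝ) '' K) M ∧
      0 < M :=
  positive_min_over_superdifferential_general K hKne hKcomp H hdiff hconv vbar pbar hgrad Φbar hΦ
    hproj
end

section
/- Separation of trajectories from a straight line (abstract form of Lemma 3 of the paper): Let D = [t₀, t₀+T] × B̄(x₀, R) ⊂ ℝ × ℝ^d, let φ : D → ℝ be C¹ with ‖∇φ(t,x)‖ ≤ Λ on D, let G : D × ℝ^d → ℝ^d be continuous, and let p̄, v̄ ∈ ℝ^d, c ∈ ℝ, m > 0 satisfy: (i) ∂_tφ(t,x) + ⟨∇φ(t,x) − p̄, G(t,x,∇φ(t,x))⟩ ≥ c + m for all (t,x) ∈ D; (ii) ∂_tφ(t,Γ(t)) + ⟨∇φ(t,Γ(t)) − p̄, v̄⟩ ≤ c for all t ∈ [t₀, t₀+T], where Γ(t) := x₀ + (t−t₀)·v̄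 is assumed to lie in B̄(x₀,R) for such t. Let γ : [t₀, t₀+T] → B̄(x₀, R) be C¹ with γ'(t) = G(t, γ(t), ∇φ(t, γ(t))), and let τ ∈ (0, T), δ > 0 with ‖γ(t₀+τ) − Γ(t₀+τ)‖ ≤ δτ. Then for all t ∈ [t₀+τ, t₀+T]: ‖γ(t) − Γ(t)‖ ≥ m·(t − t₀ − τ)/(Λ + ‖p̄‖) − δτ. -/
open scoped InnerProductSpace
open Set

/-!
With `Γ(t) = x₀ + (t - t₀) v̄`, the gap `g(t) = φ(t, γ t) - φ(t, Γ t) - ⟨p̄, γ t - Γ t⟩` has,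
by the chain rule, derivative `(∂ₜφ + ⟨∇φ - p̄, γ'⟩)(t, γ t) - (∂ₜφ + ⟨∇φ - p̄, v̄⟩)(t, Γ t) ≥ m`,
while the gradient bound makes `|g t| ≤ (Λ + ‖p̄‖) ‖γ t - Γ t‖`. Hence `g` grows at least
linearly from `g(t₀ + τ) ≥ -(Λ + ‖p̄‖) δτ`, and so must `(Λ + ‖p̄‖) ‖γ t - Γ t‖`.
-/

section Calculus

variable {E : Type*} [NormedAddCommGroup E] [InnerProductSpace ℝ E] [CompleteSpace E]

theorem hasDerivAt_apply_curve {φ : ℝ → E → ℝ} {u : ℝ → E} {u' : E} {t : ℝ}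
    (hφ : DifferentiableAt ℝ (fun q : ℝ × E => φ q.1 q.2) (t, u t))
    (hu : HasDerivAt u u' t) :
    HasDerivAt (fun s => φ s (u s))
      (deriv (fun s => φ s (u t)) t + ⟪gradient (φ t) (u t), u'⟫_ℝ) t := by
  set L := fderiv ℝ (fun q : ℝ × E => φ q.1 q.2) (t, u t)
  have hL : HasFDerivAt (fun q : ℝ × E => φ q.1 q.2) L (t, u t) := hφ.hasFDerivAt
  have htime : deriv (fun s => φ s (u t)) t = L (1, 0) := by
    have h := hL.comp_hasDerivAt t ((hasDerivAt_id t).prodMk (hasDerivAt_const t (u t)))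
    exact h.deriv
  have hspace : fderiv ℝ (φ t) (u t) = L.comp (ContinuousLinearMap.inr ℝ ℝ E) :=
    (hL.comp (u t) (hasFDerivAt_prodMk_right t (u t))).fderiv
  refine (hL.comp_hasDerivAt t ((hasDerivAt_id t).prodMk hu)).congr_deriv ?_
  rw [htime, inner_gradient_left, hspace, ContinuousLinearMap.comp_apply, ← map_add]
  simp

theorem hasDerivAt_sub_sub_inner_along_curves {φ : ℝ → E → ℝ} {γ Γ : ℝ → E} {v w p : E}
    {t : ℝ}
    (hφγ : DifferentiableAt ℝ (fun q : ℝ × E => φ q.1 q.2) (t, γ t))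
    (hφΓ : DifferentiableAt ℝ (fun q : ℝ × E => φ q.1 q.2) (t, Γ t))
    (hγ : HasDerivAt γ v t) (hΓ : HasDerivAt Γ w t) :
    HasDerivAt (fun s => φ s (γ s) - φ s (Γ s) - ⟪p, γ s - Γ s⟫_ℝ)
      ((deriv (fun s => φ s (γ t)) t + ⟪gradient (φ t) (γ t) - p, v⟫_ℝ)
        - (deriv (fun s => φ s (Γ t)) t + ⟪gradient (φ t) (Γ t) - p, w⟫_ℝ)) t := by
  refine (((hasDerivAt_apply_curve hφγ hγ).sub (hasDerivAt_apply_curve hφΓ hΓ)).sub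
    ((hasDerivAt_const t p).inner ℝ (hγ.sub hΓ))).congr_deriv ?_
  simp only [inner_sub_left, inner_sub_right, inner_zero_left, add_zero]
  ring

theorem Convex.norm_image_sub_le_of_norm_gradient_le {f : E → ℝ} {s : Set E} {x y : E} {C : ℝ}
    (hf : ∀ z ∈ s, DifferentiableAt ℝ f z) (bound : ∀ z ∈ s, ‖gradient f z‖ ≤ C)
    (hs : Convex ℝ s) (xs : x ∈ s) (ys : y ∈ s) : ‖f y - f x‖ ≤ C * ‖y - x‖ :=
  hs.norm_image_sub_le_of_norm_fderiv_le hf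
    (fun z hz => by simpa [gradient] using bound z hz) xs ys

theorem Convex.abs_image_sub_sub_inner_le {f : E → ℝ} {s : Set E} {x y p : E} {C : ℝ}
    (hf : ∀ z ∈ s, DifferentiableAt ℝ f z) (bound : ∀ z ∈ s, ‖gradient f z‖ ≤ C)
    (hs : Convex ℝ s) (xs : x ∈ s) (ys : y ∈ s) :
    |f y - f x - ⟪p, y - x⟫_ℝ| ≤ (C + ‖p‖) * ‖y - x‖ := by
  have hf_lip := hs.norm_image_sub_le_of_norm_gradient_le hf bound xs ys
  have hp := abs_real_inner_le_norm p (y - x)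
  rw [Real.norm_eq_abs] at hf_lip
  calc |f y - f x - ⟪p, y - x⟫_ℝ| ≤ |f y - f x| + |⟪p, y - x⟫_ℝ| := abs_sub _ _
    _ ≤ (C + ‖p‖) * ‖y - x‖ := by linarith

end Calculus

theorem sub_le_of_le_deriv_of_abs_le_mul {g g' e : ℝ → ℝ} {a b m K η : ℝ} (hK : 0 ≤ K)
    (hg : ∀ s ∈ Icc a b, HasDerivAt g (g' s) s) (hm : ∀ s ∈ Icc a b, m ≤ g' s)
    (hge : ∀ s ∈ Icc a b, |g s| ≤ K * e s) (he : ∀ s, 0 ≤ e s) (ha : e a ≤ η) :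
    ∀ t ∈ Icc a b, m * (t - a) / K - η ≤ e t := by
  intro t ht
  have hab : a ∈ Icc a b := ⟨le_rfl, ht.1.trans ht.2⟩
  have hgrowth : m * (t - a) ≤ g t - g a :=
    (convex_Icc a b).mul_sub_le_image_sub_of_le_deriv
      (fun s hs => (hg s hs).continuousAt.continuousWithinAt)
      (fun s hs => (hg s (interior_subset hs)).differentiableAt.differentiableWithinAt)
      (fun s hs => (hg s (interior_subset hs)).deriv ▸ hm s (interior_subset hs))
      a hab t ht ht.1
  have hgt := (le_abs_self (g t)).trans (hge t ht)
  have hga := (neg_abs_le (g a)).trans' (neg_le_neg (hge a hab))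
  rcases hK.eq_or_lt with rfl | hKpos
  · linarith [he a, he t, div_zero (m * (t - a))]
  · rw [sub_le_iff_le_add, div_le_iff₀ hKpos]
    nlinarith [mul_le_mul_of_nonneg_left ha hK]

theorem trajectory_separates_from_line_general {d : ℕ}
    (t₀ T R Λ c m τ δ : ℝ)
    (x₀ pbar vbar : EuclideanSpace ℝ (Fin d))
    (φ : ℝ → EuclideanSpace ℝ (Fin d) → ℝ)
    (G : ℝ → EuclideanSpace ℝ (Fin d) → EuclideanSpace ℝ (Fin d) →
      EuclideanSpace ℝ (Fin d))
    (γ : ℝ → EuclideanSpace ℝ (Fin d))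
    (hτ : 0 < τ)
    (hφ : ContDiff ℝ 1 fun q : ℝ × EuclideanSpace ℝ (Fin d) => φ q.1 q.2)
    (hΛ : ∀ t ∈ Set.Icc t₀ (t₀ + T), ∀ x ∈ Metric.closedBall x₀ R,
      ‖gradient (φ t) x‖ ≤ Λ)
    (hi : ∀ t ∈ Set.Icc t₀ (t₀ + T), ∀ x ∈ Metric.closedBall x₀ R,
      c + m ≤ deriv (fun s => φ s x) t
        + ⟪gradient (φ t) x - pbar, G t x (gradient (φ t) x)⟫_ℝ)
    (hΓmem : ∀ t ∈ Set.Icc t₀ (t₀ + T),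
      x₀ + (t - t₀) • vbar ∈ Metric.closedBall x₀ R)
    (hii : ∀ t ∈ Set.Icc t₀ (t₀ + T),
      deriv (fun s => φ s (x₀ + (t - t₀) • vbar)) t
        + ⟪gradient (φ t) (x₀ + (t - t₀) • vbar) - pbar, vbar⟫_ℝ ≤ c)
    (hγmem : ∀ t ∈ Set.Icc t₀ (t₀ + T), γ t ∈ Metric.closedBall x₀ R)
    (hγ : ∀ t ∈ Set.Icc t₀ (t₀ + T),
      HasDerivAt γ (G t (γ t) (gradient (φ t) (γ t))) t)
    (hclose : ‖γ (t₀ + τ) - (x₀ + τ • vbar)‖ ≤ δ * τ) :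
    ∀ t ∈ Set.Icc (t₀ + τ) (t₀ + T),
      m * (t - t₀ - τ) / (Λ + ‖pbar‖) - δ * τ ≤ ‖γ t - (x₀ + (t - t₀) • vbar)‖ := by
  intro t ht
  have hsub : Icc (t₀ + τ) (t₀ + T) ⊆ Icc t₀ (t₀ + T) := Icc_subset_Icc (by linarith) le_rfl
  have hφd := hφ.differentiable one_ne_zero
  have hline : ∀ s, HasDerivAt (fun s => x₀ + (s - t₀) • vbar) vbar s := fun s => by
    simpa using (((hasDerivAt_id s).sub_const t₀).smul_const vbar).const_add x₀
  have hΛ0 : 0 ≤ Λ := (norm_nonneg _).trans (hΛ t (hsub ht) (γ t) (hγmem t (hsub ht)))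
  have hsep := sub_le_of_le_deriv_of_abs_le_mul (m := m) (K := Λ + ‖pbar‖) (η := δ * τ)
    (by positivity)
    (fun s hs => hasDerivAt_sub_sub_inner_along_curves (p := pbar) (hφd _) (hφd _)
      (hγ s (hsub hs)) (hline s))
    (fun s hs => by linarith [hi s (hsub hs) (γ s) (hγmem s (hsub hs)), hii s (hsub hs)])
    (fun s hs => (convex_closedBall x₀ R).abs_image_sub_sub_inner_le
      (fun z _ => (hφd.comp (differentiable_const s |>.prodMk differentiable_id)) z)
      (hΛ s (hsub hs)) (hΓmem s (hsub hs)) (hγmem s (hsub hs)))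
    (fun s => norm_nonneg _) (by simpa using hclose) t ht
  convert hsep using 3
  ring

/-- Abstract form of Lemma 3 of the paper: a trajectory of the field
`G(t, x, ∇φ(t,x))` that comes `δτ`-close to the straight line `Γ(t) = x₀ + (t−t₀)v̄`
at time `t₀ + τ` must separate from it at the stated linear rate afterwards. -/
theorem trajectory_separates_from_line {d : ℕ}
    (t₀ T R Λ c m τ δ : ℝ)
    (x₀ pbar vbar : EuclideanSpace ℝ (Fin d))
    (φ : ℝ → EuclideanSpace ℝ (Fin d) → ℝ)
    (G : ℝ → EuclideanSpace ℝ (Fin d) → EuclideanSpace ℝ (Fin d) →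
      EuclideanSpace ℝ (Fin d))
    (γ : ℝ → EuclideanSpace ℝ (Fin d))
    (hT : 0 < T) (hR : 0 < R) (hm : 0 < m) (hτ : 0 < τ) (hτT : τ < T) (hδ : 0 < δ)
    (hφ : ContDiff ℝ 1 fun q : ℝ × EuclideanSpace ℝ (Fin d) => φ q.1 q.2)
    (hG : Continuous fun q : ℝ × EuclideanSpace ℝ (Fin d) × EuclideanSpace ℝ (Fin d) =>
      G q.1 q.2.1 q.2.2)
    (hΛ : ∀ t ∈ Set.Icc t₀ (t₀ + T), ∀ x ∈ Metric.closedBall x₀ R,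
      ‖gradient (φ t) x‖ ≤ Λ)
    (hi : ∀ t ∈ Set.Icc t₀ (t₀ + T), ∀ x ∈ Metric.closedBall x₀ R,
      c + m ≤ deriv (fun s => φ s x) t
        + ⟪gradient (φ t) x - pbar, G t x (gradient (φ t) x)⟫_ℝ)
    (hΓmem : ∀ t ∈ Set.Icc t₀ (t₀ + T),
      x₀ + (t - t₀) • vbar ∈ Metric.closedBall x₀ R)
    (hii : ∀ t ∈ Set.Icc t₀ (t₀ + T),
      deriv (fun s => φ s (x₀ + (t - t₀) • vbar)) t
        + ⟪gradient (φ t) (x₀ + (t - t₀) • vbar) - pbar, vbar⟫_ℝ ≤ c)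
    (hγmem : ∀ t ∈ Set.Icc t₀ (t₀ + T), γ t ∈ Metric.closedBall x₀ R)
    (hγ : ∀ t ∈ Set.Icc t₀ (t₀ + T),
      HasDerivAt γ (G t (γ t) (gradient (φ t) (γ t))) t)
    (hclose : ‖γ (t₀ + τ) - (x₀ + τ • vbar)‖ ≤ δ * τ) :
    ∀ t ∈ Set.Icc (t₀ + τ) (t₀ + T),
      m * (t - t₀ - τ) / (Λ + ‖pbar‖) - δ * τ ≤ ‖γ t - (x₀ + (t - t₀) • vbar)‖ :=
  trajectory_separates_from_line_general t₀ T R Λ c m τ δ x₀ pbar vbar φ G γ hτ hφ hΛ hi hΓmem hii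
    hγmem hγ hclose
end

section
/- Regularity of the conjugate Lagrangian and inversion of Legendre transforms: let H : ℝ^d → ℝ be C¹, strictly convex, and superlinear (H(p)/‖p‖ → ∞ as ‖p‖ → ∞). Then its conjugate L(v) = sup_{p∈ℝ^d}(⟨p, v⟩ − H(p)) is finite everywhere, differentiable, strictly convex, and superlinear, and the gradient maps are mutually inverse bijections of ℝ^d: ∇L(∇H(p)) = p for all p and ∇H(∇L(v)) = v for all v. -/
/-!
For convex differentiable `H`, a point `p` maximizes `q ↦ ⟪q, v⟫ - H q` exactly when
`∇H p = v`. Superlinearity makes such a maximizer exist and strict convexity makes it unique, so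
`∇H` is a bijection; it is also proper, hence a homeomorphism, and `L v = ⟪T v, v⟫ - H (T v)`
with `T = (∇H)⁻¹` continuous. As `T u` is a subgradient of `L` at `u`, the increment
`L (v + h) - L v` lies between `⟪T v, h⟫` and `⟪T (v + h), h⟫`, so `∇L = T` by continuity of `T`.
Equality in the convexity inequality for `L` would make one `p` a maximizer for two different `v`,
which `∇H p = v` forbids; superlinearity of `L` comes from testing the supremum at points of a
fixed large norm.
-/

open scoped InnerProductSpace

open Filter Set Bornology InnerProductSpace

section

variable {E : Type*} [NormedAddCommGroup E] [NormedSpace ℝ E]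

theorem ConvexOn.add_fderiv_sub_le {f : E → ℝ} {f' : E →L[ℝ] ℝ} {x : E}
    (hf : ConvexOn ℝ univ f) (hx : HasFDerivAt f f' x) (y : E) : f x + f' (y - x) ≤ f y := by
  set g : ℝ → ℝ := fun t => f (AffineMap.lineMap x y t)
  have hg : ConvexOn ℝ univ g := hf.comp_affineMap (AffineMap.lineMap x y)
  have hline : HasDerivAt (fun t : ℝ => AffineMap.lineMap x y t) (y - x) 0 := by
    simpa [AffineMap.lineMap_apply_module'] using
      ((hasDerivAt_id (0 : ℝ)).smul_const (y - x)).add_const x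
  have hg' : HasDerivAt g (f' (y - x)) 0 := by
    rw [← AffineMap.lineMap_apply_zero (k := ℝ) x y] at hx
    exact hx.comp_hasDerivAt 0 hline
  have := hg.le_slope_of_hasDerivAt (mem_univ 0) (mem_univ 1) zero_lt_one hg'
  simp only [slope_def_field, sub_zero, div_one, g, AffineMap.lineMap_apply_zero,
    AffineMap.lineMap_apply_one] at this
  linarith

end

section

variable {E : Type*} [NormedAddCommGroup E]

def Superlinear (f : E → ℝ) : Prop :=
  Tendsto (fun x => f x / ‖x‖) (comap (fun x : E => ‖x‖) atTop) atTop

theorem superlinear_iff {f : E → ℝ} :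
    Superlinear f ↔ ∀ R, ∀ᶠ x in cobounded E, R * ‖x‖ ≤ f x := by
  have hpos : ∀ᶠ x : E in cobounded E, 0 < ‖x‖ :=
    tendsto_norm_cobounded_atTop.eventually_gt_atTop 0
  rw [Superlinear, comap_norm_atTop, tendsto_atTop]
  refine forall_congr' fun R => ⟨fun h => ?_, fun h => ?_⟩ <;>
    filter_upwards [h, hpos] with x hx hx0
  · rwa [le_div_iff₀ hx0] at hx
  · rwa [le_div_iff₀ hx0]

end

section

variable {E : Type*} [NormedAddCommGroup E] [InnerProductSpace ℝ E] {H : E → ℝ} {p v : E}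

theorem Superlinear.exists_isMaxOn_inner_sub [ProperSpace E] (hH : Superlinear H)
    (hc : Continuous H) (v : E) : ∃ p, IsMaxOn (fun q => ⟪q, v⟫_ℝ - H q) univ p := by
  have hbound : ∀ᶠ q in cobounded E, ⟪q, v⟫_ℝ - H q ≤ -‖q‖ := by
    filter_upwards [superlinear_iff.mp hH (‖v‖ + 1)] with q hq
    nlinarith [real_inner_le_norm q v]
  have hlim : Tendsto (fun q => ⟪q, v⟫_ℝ - H q) (cocompact E) atBot := by
    rw [← Metric.cobounded_eq_cocompact]
    exact tendsto_atBot_mono' _ hbound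
      (tendsto_neg_atTop_atBot.comp tendsto_norm_cobounded_atTop)
  obtain ⟨p, hp⟩ := ((continuous_id.inner continuous_const).sub hc).exists_forall_ge hlim
  exact ⟨p, isMaxOn_univ_iff.mpr hp⟩

/-- The supremum is the junk value `0` where it is infinite; below it is only evaluated where
it is attained. -/
noncomputable def legendreConjugate (H : E → ℝ) (v : E) : ℝ :=
  ⨆ p, ⟪p, v⟫_ℝ - H p

theorem legendreConjugate_eq_of_isMaxOn (h : IsMaxOn (fun q => ⟪q, v⟫_ℝ - H q) univ p) :
    legendreConjugate H v = ⟪p, v⟫_ℝ - H p :=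
  ciSup_eq_of_forall_le_of_forall_lt_exists_gt (isMaxOn_univ_iff.mp h) fun _ hw => ⟨p, hw⟩

theorem inner_sub_le_legendreConjugate (h : IsMaxOn (fun q => ⟪q, v⟫_ℝ - H q) univ p) (q : E) :
    ⟪q, v⟫_ℝ - H q ≤ legendreConjugate H v :=
  legendreConjugate_eq_of_isMaxOn h ▸ isMaxOn_univ_iff.mp h q

theorem isLUB_legendreConjugate (h : IsMaxOn (fun q => ⟪q, v⟫_ℝ - H q) univ p) :
    IsLUB (range fun q => ⟪q, v⟫_ℝ - H q) (legendreConjugate H v) := by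
  rw [legendreConjugate_eq_of_isMaxOn h]
  exact ⟨forall_mem_range.mpr (isMaxOn_univ_iff.mp h), fun _ hb => hb ⟨p, rfl⟩⟩

theorem legendreConjugate_add_inner_sub_le {T : E → E}
    (hT : ∀ v, IsMaxOn (fun q => ⟪q, v⟫_ℝ - H q) univ (T v)) (u w : E) :
    legendreConjugate H u + ⟪T u, w - u⟫_ℝ ≤ legendreConjugate H w := by
  rw [legendreConjugate_eq_of_isMaxOn (hT u), inner_sub_right]
  linarith [inner_sub_le_legendreConjugate (hT w) (T u)]

theorem superlinear_legendreConjugate [ProperSpace E] (hc : Continuous H) {T : E → E}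
    (hT : ∀ v, IsMaxOn (fun q => ⟪q, v⟫_ℝ - H q) univ (T v)) :
    Superlinear (legendreConjugate H) := by
  refine superlinear_iff.mpr fun R => ?_
  set ρ := |R| + 1
  obtain ⟨C, hC⟩ := (isCompact_closedBall (0 : E) ρ).exists_bound_of_continuousOn hc.continuousOn
  have hnorm := tendsto_norm_cobounded_atTop (E := E)
  filter_upwards [hnorm.eventually_gt_atTop 0, hnorm.eventually_ge_atTop C] with v hv0 hvC
  set p := (ρ / ‖v‖) • v
  have hp : ‖p‖ = ρ := by
    rw [norm_smul, norm_div, norm_norm, Real.norm_of_nonneg (by positivity),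
      div_mul_cancel₀ _ hv0.ne']
  have hpv : ⟪p, v⟫_ℝ = ρ * ‖v‖ := by
    rw [real_inner_smul_left, real_inner_self_eq_norm_mul_norm]
    field_simp
  have hHp : H p ≤ C := (le_abs_self _).trans (hC p (by simp [hp]))
  have := inner_sub_le_legendreConjugate (hT v) p
  nlinarith [le_abs_self R]

end

section

variable {E : Type*} [NormedAddCommGroup E] [InnerProductSpace ℝ E] [CompleteSpace E]
  {H : E → ℝ} {p v : E}

theorem ConvexOn.add_inner_gradient_sub_le (hH : ConvexOn ℝ univ H) {x : E}
    (hx : DifferentiableAt ℝ H x) (y : E) : H x + ⟪gradient H x, y - x⟫_ℝ ≤ H y := by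
  rw [inner_gradient_left]
  exact hH.add_fderiv_sub_le hx.hasFDerivAt y

theorem gradient_eq_of_isMaxOn_inner_sub (hp : DifferentiableAt ℝ H p)
    (hmax : IsMaxOn (fun q => ⟪q, v⟫_ℝ - H q) univ p) : gradient H p = v := by
  have hlin : HasFDerivAt (fun q => ⟪q, v⟫_ℝ) (toDual ℝ E v) p := by
    convert (toDual ℝ E v).hasFDerivAt using 1
    ext q
    rw [toDual_apply_apply, real_inner_comm]
  have h0 := (hmax.isLocalMax univ_mem).hasFDerivAt_eq_zero (hlin.sub hp.hasFDerivAt)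
  rw [sub_eq_zero, ← toDual_gradient] at h0
  exact (toDual ℝ E).injective h0.symm

theorem ConvexOn.isMaxOn_inner_sub_of_gradient_eq (hH : ConvexOn ℝ univ H)
    (hp : DifferentiableAt ℝ H p) (hv : gradient H p = v) :
    IsMaxOn (fun q => ⟪q, v⟫_ℝ - H q) univ p := by
  refine isMaxOn_univ_iff.mpr fun q => ?_
  have := hH.add_inner_gradient_sub_le hp q
  rw [hv, inner_sub_right] at this
  linarith [real_inner_comm v p, real_inner_comm v q]

theorem StrictConvexOn.injective_gradient (hH : StrictConvexOn ℝ univ H)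
    (hd : Differentiable ℝ H) : Function.Injective (gradient H) := by
  intro x y hxy
  have hconc : StrictConcaveOn ℝ univ (fun q => ⟪q, gradient H y⟫_ℝ - H q) := by
    have h := ((innerₛₗ ℝ (gradient H y)).concaveOn convex_univ).add_strictConcaveOn hH.neg
    rwa [show ⇑(innerₛₗ ℝ (gradient H y)) + -H = fun q => ⟪q, gradient H y⟫_ℝ - H q from
      funext fun q => by simp [sub_eq_add_neg]] at h
  have hmax := fun x => hH.convexOn.isMaxOn_inner_sub_of_gradient_eq (hd x) rfl
  exact hconc.eq_of_isMaxOn (hxy ▸ hmax x) (hmax y) (mem_univ x) (mem_univ y)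

theorem Superlinear.tendsto_gradient_cobounded (hs : Superlinear H) (hH : ConvexOn ℝ univ H)
    (hd : Differentiable ℝ H) : Tendsto (gradient H) (cobounded E) (cobounded E) := by
  rw [← tendsto_norm_atTop_iff_cobounded, tendsto_atTop]
  intro R
  have hnorm := tendsto_norm_cobounded_atTop (E := E)
  filter_upwards [superlinear_iff.mp hs (R + 1), hnorm.eventually_gt_atTop 0,
    hnorm.eventually_ge_atTop (H 0)] with p hp hp0 hpH
  have hgrad : H p - H 0 ≤ ‖gradient H p‖ * ‖p‖ := by
    have := hH.add_inner_gradient_sub_le (hd p) 0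
    rw [zero_sub, inner_neg_right] at this
    linarith [real_inner_le_norm (gradient H p) p]
  exact le_of_mul_le_mul_right (by linarith) hp0

theorem isHomeomorph_gradient [ProperSpace E] (hH : ContDiff ℝ 1 H)
    (hc : StrictConvexOn ℝ univ H) (hs : Superlinear H) : IsHomeomorph (gradient H) := by
  have hd : Differentiable ℝ H := hH.differentiable one_ne_zero
  have hcont : Continuous (gradient H) :=
    (toDual ℝ E).symm.continuous.comp (hH.continuous_fderiv one_ne_zero)
  have hproper : IsProperMap (gradient H) := by
    refine isProperMap_iff_tendsto_cocompact.mpr ⟨hcont, ?_⟩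
    simpa only [← Metric.cobounded_eq_cocompact] using
      hs.tendsto_gradient_cobounded hc.convexOn hd
  refine isHomeomorph_iff_continuous_isClosedMap_bijective.mpr
    ⟨hcont, hproper.isClosedMap, hc.injective_gradient hd, fun v => ?_⟩
  obtain ⟨p, hp⟩ := hs.exists_isMaxOn_inner_sub hH.continuous v
  exact ⟨p, gradient_eq_of_isMaxOn_inner_sub (hd p) hp⟩

theorem hasGradientAt_of_forall_add_inner_sub_le {f : E → ℝ} {T : E → E} {v : E}
    (hT : ContinuousAt T v) (hsub : ∀ u w, f u + ⟪T u, w - u⟫_ℝ ≤ f w) :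
    HasGradientAt f (T v) v := by
  refine hasGradientAt_iff_isLittleO.mpr <| Asymptotics.isLittleO_iff.mpr fun c hc => ?_
  filter_upwards [hT (Metric.closedBall_mem_nhds (T v) hc)] with u hu
  rw [mem_preimage, Metric.mem_closedBall, dist_eq_norm] at hu
  have hlow := hsub v u
  have hup := hsub u v
  have hcs : ⟪T u - T v, u - v⟫_ℝ ≤ c * ‖u - v‖ :=
    (real_inner_le_norm _ _).trans (mul_le_mul_of_nonneg_right hu (norm_nonneg _))
  rw [← neg_sub u v, inner_neg_right] at hup
  rw [inner_sub_left] at hcs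
  rw [Real.norm_eq_abs, abs_le]
  constructor <;> nlinarith [norm_nonneg (u - v)]

theorem strictConvexOn_legendreConjugate (hd : Differentiable ℝ H) {T : E → E}
    (hT : ∀ v, IsMaxOn (fun q => ⟪q, v⟫_ℝ - H q) univ (T v)) :
    StrictConvexOn ℝ univ (legendreConjugate H) := by
  refine ⟨convex_univ, fun x _ y _ hxy a b ha hb hab => ?_⟩
  set p := T (a • x + b • y)
  have hx := inner_sub_le_legendreConjugate (hT x) p
  have hy := inner_sub_le_legendreConjugate (hT y) p
  have hz : legendreConjugate H (a • x + b • y) =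
      a * (⟪p, x⟫_ℝ - H p) + b * (⟪p, y⟫_ℝ - H p) := by
    rw [legendreConjugate_eq_of_isMaxOn (hT _), inner_add_right, real_inner_smul_right,
      real_inner_smul_right]
    linear_combination H p * hab
  have hstrict :
      ⟪p, x⟫_ℝ - H p < legendreConjugate H x ∨ ⟪p, y⟫_ℝ - H p < legendreConjugate H y := by
    by_contra! heq
    have hmax : ∀ w, ⟪p, w⟫_ℝ - H p = legendreConjugate H w → gradient H p = w := fun w hw =>
      gradient_eq_of_isMaxOn_inner_sub (hd p) <| isMaxOn_univ_iff.mpr fun q =>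
        hw ▸ inner_sub_le_legendreConjugate (hT w) q
    exact hxy ((hmax x (le_antisymm hx heq.1)).symm.trans (hmax y (le_antisymm hy heq.2)))
  rw [hz, smul_eq_mul, smul_eq_mul]
  rcases hstrict with h | h
  · nlinarith [mul_lt_mul_of_pos_left h ha, mul_le_mul_of_nonneg_left hy hb.le]
  · nlinarith [mul_le_mul_of_nonneg_left hx ha.le, mul_lt_mul_of_pos_left h hb]

end

/-- Regularity of the conjugate Lagrangian and inversion of Legendre transforms:
if `H` is `C¹`, strictly convex and superlinear, then the conjugate
`L(v) = sup_p (⟨p,v⟩ − H(p))` is finite everywhere, differentiable, strictly convex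
and superlinear, and `∇L` and `∇H` are mutually inverse bijections of `ℝ^d`. -/
theorem conjugate_regularity_and_inversion {d : ℕ}
    (H : EuclideanSpace ℝ (Fin d) → ℝ)
    (hH : ContDiff ℝ 1 H)
    (hconv : StrictConvexOn ℝ Set.univ H)
    (hsuper : Filter.Tendsto (fun p => H p / ‖p‖)
      (Filter.comap (fun p : EuclideanSpace ℝ (Fin d) => ‖p‖) Filter.atTop)
      Filter.atTop) :
    ∃ L : EuclideanSpace ℝ (Fin d) → ℝ,
      (∀ v, IsLUB {y : ℝ | ∃ p : EuclideanSpace ℝ (Fin d), y = ⟪p, v⟫_ℝ - H p} (L v)) ∧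
      Differentiable ℝ L ∧
      StrictConvexOn ℝ Set.univ L ∧
      Filter.Tendsto (fun v => L v / ‖v‖)
        (Filter.comap (fun v : EuclideanSpace ℝ (Fin d) => ‖v‖) Filter.atTop)
        Filter.atTop ∧
      Function.Bijective (gradient H) ∧
      Function.Bijective (gradient L) ∧
      (∀ p, gradient L (gradient H p) = p) ∧
      (∀ v, gradient H (gradient L v) = v) := by
  have hd : Differentiable ℝ H := hH.differentiable one_ne_zero
  have hhom : IsHomeomorph (gradient H) := isHomeomorph_gradient hH hconv hsuper
  set e := hhom.homeomorph (gradient H)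
  have hmax : ∀ v, IsMaxOn (fun q => ⟪q, v⟫_ℝ - H q) univ (e.symm v) := fun v =>
    hconv.convexOn.isMaxOn_inner_sub_of_gradient_eq (hd _) (e.apply_symm_apply v)
  have hLgrad : ∀ v, HasGradientAt (legendreConjugate H) (e.symm v) v := fun _ =>
    hasGradientAt_of_forall_add_inner_sub_le e.symm.continuous.continuousAt
      (legendreConjugate_add_inner_sub_le hmax)
  have hgradL : gradient (legendreConjugate H) = e.symm := gradient_eq hLgrad
  refine ⟨legendreConjugate H, fun v => ?_, fun v => (hLgrad v).differentiableAt,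
    strictConvexOn_legendreConjugate hd hmax, superlinear_legendreConjugate hH.continuous hmax,
    hhom.bijective, ?_, ?_, ?_⟩
  · have hset : {y | ∃ p, y = ⟪p, v⟫_ℝ - H p} = range fun q => ⟪q, v⟫_ℝ - H q := by
      ext; simp [eq_comm]
    exact hset ▸ isLUB_legendreConjugate (hmax v)
  · exact hgradL ▸ e.symm.bijective
  · exact fun p => hgradL ▸ e.symm_apply_apply p
  · exact fun v => hgradL ▸ e.apply_symm_apply v
end

section
/- Quadratic case — the admissible velocity is the center of the smallest enclosing ball: let v_i ∈ ℝ^d, i ∈ 𝕀 (𝕀 finite nonempty). Then the function v ↦ max_{i∈𝕀} ‖v − v_i‖² has a unique minimizer v*; setting r = max_{i∈𝕀} ‖v* − v_i‖, every closed ball containing all v_i has radius at least r, and v* ∈ convexHull{v_j : ‖v* − v_j‖ = r}. Equivalently, with L(v) = ‖v‖²/2, p_i = v_i, H_i = ‖v_i‖²/2, the unique admissible velocity in the sense of Theorem 1 equals the center of the smallest closed ball containing all v_i. -/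
/-!
Let `w` minimize the farthest distance `R(w) = maxᵢ ‖w - vᵢ‖`. If `w` were not in the convex hull
of its farthest points, a direction separating `w` from that hull would decrease the distance to
every farthest point, and small steps along it keep the other points closer than `R(w)`; so
`R` would decrease. Conversely, if `w` is in that hull, then for every `u` some farthest point `z`
sees `u - w` and `w - z` at a non-acute angle, whence `R(u)² ≥ ‖u - z‖² ≥ R(w)² + ‖u - w‖²`:
`w` is the strict minimizer. With `L(v) = ‖v‖²/2` one has `∇L(w) = w` and
`-‖vᵢ‖²/2 + ⟪vᵢ, w⟫ = (‖w‖² - ‖w - vᵢ‖²)/2`, so the active indices are the farthest points and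
admissibility is the same hull condition.
-/

open scoped InnerProductSpace
open Finset Filter Topology

lemma gradient_half_norm_sq {E : Type*} [NormedAddCommGroup E] [InnerProductSpace ℝ E]
    [CompleteSpace E] (x : E) :
    gradient (fun w : E => ‖w‖ ^ 2 / 2) x = x := by
  have h := (hasStrictFDerivAt_norm_sq x).hasFDerivAt.mul_const (2⁻¹ : ℝ)
  simp only [← div_eq_mul_inv] at h
  exact HasGradientAt.gradient <| h.congr_fderiv <| by ext y; simp

namespace EnclosingBall

variable {E : Type*} [NormedAddCommGroup E] {ι : Type*} [Fintype ι] [Nonempty ι]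

noncomputable def maxDist (v : ι → E) (w : E) : ℝ :=
  univ.sup' univ_nonempty fun i => ‖w - v i‖

def farthest (v : ι → E) (w : E) : Set ι :=
  {j | ‖w - v j‖ = maxDist v w}

lemma norm_sub_le_maxDist (v : ι → E) (w : E) (i : ι) : ‖w - v i‖ ≤ maxDist v w :=
  le_sup' (fun i => ‖w - v i‖) (mem_univ i)

lemma maxDist_nonneg (v : ι → E) (w : E) : 0 ≤ maxDist v w :=
  (norm_nonneg _).trans (norm_sub_le_maxDist v w (Classical.arbitrary ι))

lemma maxDist_le_of_forall_mem_closedBall {v : ι → E} {c : E} {ρ : ℝ}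
    (h : ∀ i, v i ∈ Metric.closedBall c ρ) : maxDist v c ≤ ρ :=
  sup'_le _ _ fun i _ => by simpa [dist_eq_norm'] using h i

lemma mem_farthest_iff {v : ι → E} {w : E} {j : ι} :
    j ∈ farthest v w ↔ ∀ i, ‖w - v i‖ ≤ ‖w - v j‖ :=
  ⟨fun h i => (norm_sub_le_maxDist v w i).trans h.ge,
    fun h => (norm_sub_le_maxDist v w j).antisymm (sup'_le _ _ fun i _ => h i)⟩

lemma sup'_norm_sub_sq (v : ι → E) (w : E) :
    univ.sup' univ_nonempty (fun i => ‖w - v i‖ ^ 2) = maxDist v w ^ 2 := by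
  obtain ⟨j, -, hj⟩ := exists_mem_eq_sup' univ_nonempty fun i => ‖w - v i‖
  refine le_antisymm (sup'_le _ _ fun i _ => ?_) ?_
  · exact pow_le_pow_left₀ (norm_nonneg _) (norm_sub_le_maxDist v w i) 2
  · rw [maxDist, hj]
    exact le_sup' (fun i => ‖w - v i‖ ^ 2) (mem_univ j)

lemma continuous_maxDist (v : ι → E) : Continuous (maxDist v) :=
  Continuous.finset_sup'_apply univ_nonempty fun _ _ => (continuous_id.sub continuous_const).norm

lemma exists_forall_maxDist_le [ProperSpace E] (v : ι → E) :
    ∃ w, ∀ u, maxDist v w ≤ maxDist v u := by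
  let i₀ := Classical.arbitrary ι
  refine (continuous_maxDist v).exists_forall_le <|
    tendsto_atTop_mono (fun w => ?_) (tendsto_dist_right_cocompact_atTop (v i₀))
  rw [dist_eq_norm]
  exact norm_sub_le_maxDist v w i₀

variable [InnerProductSpace ℝ E]

lemma maxDist_sq_add_norm_sub_sq_le {v : ι → E} {w : E}
    (hw : w ∈ convexHull ℝ (v '' farthest v w)) (u : E) :
    maxDist v w ^ 2 + ‖u - w‖ ^ 2 ≤ maxDist v u ^ 2 := by
  obtain ⟨_, ⟨j, hj, rfl⟩, hle⟩ :=
    ((innerₛₗ ℝ (w - u)).convexOn convex_univ).exists_ge_of_mem_convexHull (Set.subset_univ _) hw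
  have hj : ‖w - v j‖ = maxDist v w := hj
  have hangle : 0 ≤ ⟪u - w, w - v j⟫_ℝ := by
    have hexpand : ⟪u - w, w - v j⟫_ℝ = ⟪w - u, v j⟫_ℝ - ⟪w - u, w⟫_ℝ := by
      rw [← neg_sub w u, inner_neg_left, inner_sub_right]; ring
    simp only [innerₛₗ_apply_apply] at hle
    linarith
  calc maxDist v w ^ 2 + ‖u - w‖ ^ 2 ≤ ‖u - v j‖ ^ 2 := by
        rw [← hj, show u - v j = (u - w) + (w - v j) by abel, norm_add_sq_real]
        linarith
    _ ≤ maxDist v u ^ 2 := pow_le_pow_left₀ (norm_nonneg _) (norm_sub_le_maxDist v u j) 2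

lemma eq_of_mem_convexHull_farthest {v : ι → E} {w w' : E}
    (hw : w ∈ convexHull ℝ (v '' farthest v w)) (h : maxDist v w' ^ 2 ≤ maxDist v w ^ 2) :
    w' = w := by
  have hstrict := maxDist_sq_add_norm_sub_sq_le hw w'
  have hdist : ‖w' - w‖ ^ 2 = 0 := le_antisymm (by linarith) (sq_nonneg _)
  simpa [sub_eq_zero] using hdist

lemma eventually_norm_sub_smul_lt {a u : E} (h : 0 < ⟪u, a⟫_ℝ) :
    ∀ᶠ t in 𝓝[>] (0 : ℝ), ‖a - t • u‖ < ‖a‖ := by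
  have hsmall : ∀ᶠ t in 𝓝 (0 : ℝ), t * ‖u‖ ^ 2 < 2 * ⟪u, a⟫_ℝ :=
    ((continuous_mul_const (‖u‖ ^ 2)).tendsto' 0 0 (zero_mul _)).eventually_lt_const
      (by linarith)
  filter_upwards [nhdsWithin_le_nhds hsmall, self_mem_nhdsWithin] with t ht (htpos : 0 < t)
  rw [← sq_lt_sq₀ (norm_nonneg _) (norm_nonneg _), norm_sub_sq_real, real_inner_smul_right,
    norm_smul, Real.norm_eq_abs, mul_pow, sq_abs, real_inner_comm]
  nlinarith

lemma exists_maxDist_lt_of_notMem_convexHull [CompleteSpace E] {v : ι → E} {w : E}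
    (hw : w ∉ convexHull ℝ (v '' farthest v w)) : ∃ w', maxDist v w' < maxDist v w := by
  obtain ⟨φ, s, hφS, hφw⟩ := geometric_hahn_banach_closed_point (convex_convexHull ℝ _)
    ((Set.toFinite _).isCompact_convexHull ℝ).isClosed hw
  set u := (InnerProductSpace.toDual ℝ E).symm φ
  have hdescent : ∀ i, ∀ᶠ t in 𝓝[>] (0 : ℝ), ‖w - t • u - v i‖ < maxDist v w := by
    intro i
    by_cases hi : i ∈ farthest v w
    · have hui : 0 < ⟪u, w - v i⟫_ℝ := by
        rw [inner_sub_right, InnerProductSpace.toDual_symm_apply,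
          InnerProductSpace.toDual_symm_apply]
        linarith [hφS _ (subset_convexHull ℝ _ ⟨i, hi, rfl⟩)]
      filter_upwards [eventually_norm_sub_smul_lt hui] with t ht
      rwa [sub_right_comm, ← hi]
    · have hlt : ‖w - v i‖ < maxDist v w := (norm_sub_le_maxDist v w i).lt_of_ne hi
      have hcont : Tendsto (fun t : ℝ => ‖w - t • u - v i‖) (𝓝 0) (𝓝 ‖w - v i‖) := by
        have : Continuous fun t : ℝ => ‖w - t • u - v i‖ := by fun_prop
        simpa using this.tendsto 0
      exact nhdsWithin_le_nhds (hcont.eventually_lt_const hlt)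
  obtain ⟨t, ht⟩ := (eventually_all.2 hdescent).exists
  exact ⟨w - t • u, (sup'_lt_iff _).2 fun i _ => ht i⟩

lemma mem_convexHull_farthest_of_forall_maxDist_le [CompleteSpace E] {v : ι → E} {w : E}
    (hmin : ∀ u, maxDist v w ≤ maxDist v u) : w ∈ convexHull ℝ (v '' farthest v w) := by
  by_contra hw
  obtain ⟨u, hu⟩ := exists_maxDist_lt_of_notMem_convexHull hw
  exact (hmin u).not_gt hu

lemma setOf_eq_inf'_eq_farthest (v : ι → E) (w : E) :
    {j | -(‖v j‖ ^ 2 / 2) + ⟪v j, w⟫_ℝ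
        = univ.inf' univ_nonempty fun i => -(‖v i‖ ^ 2 / 2) + ⟪v i, w⟫_ℝ} = farthest v w := by
  have hvalue : ∀ i, -(‖v i‖ ^ 2 / 2) + ⟪v i, w⟫_ℝ = (‖w‖ ^ 2 - ‖w - v i‖ ^ 2) / 2 := by
    intro i
    rw [norm_sub_sq_real, real_inner_comm]
    ring
  ext j
  simp only [Set.mem_ofPred_eq, mem_farthest_iff, le_antisymm_iff, inf'_le _ (mem_univ j),
    and_true, le_inf'_iff, mem_univ, true_implies, hvalue]
  refine forall_congr' fun i => ?_
  rw [div_le_div_iff_of_pos_right two_pos, sub_le_sub_iff_left,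
    sq_le_sq₀ (norm_nonneg _) (norm_nonneg _)]

end EnclosingBall

open EnclosingBall

/-- Quadratic case: the function `v ↦ max_i ‖v − v_i‖²` has a unique minimizer `v*`,
which is the center of the smallest closed ball enclosing all the `v_i`, it lies in the
convex hull of the farthest points, and with `L(v) = ‖v‖²/2`, `p_i = v_i`,
`H_i = ‖v_i‖²/2`, it is the unique admissible velocity in the sense of Theorem 1. -/
theorem smallest_enclosing_ball_is_admissible {d : ℕ}
    {ι : Type} [Fintype ι] [Nonempty ι]
    (v : ι → EuclideanSpace ℝ (Fin d)) :
    ∃ vstar : EuclideanSpace ℝ (Fin d),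
      (∀ w, (Finset.univ.sup' Finset.univ_nonempty fun i => ‖vstar - v i‖ ^ 2)
          ≤ Finset.univ.sup' Finset.univ_nonempty fun i => ‖w - v i‖ ^ 2) ∧
      (∀ w, (∀ u, (Finset.univ.sup' Finset.univ_nonempty fun i => ‖w - v i‖ ^ 2)
          ≤ Finset.univ.sup' Finset.univ_nonempty fun i => ‖u - v i‖ ^ 2) → w = vstar) ∧
      (∀ (c : EuclideanSpace ℝ (Fin d)) (ρ : ℝ),
        (∀ i, v i ∈ Metric.closedBall c ρ) →
        (Finset.univ.sup' Finset.univ_nonempty fun i => ‖vstar - v i‖) ≤ ρ) ∧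
      vstar ∈ convexHull ℝ
        (v '' {j | ‖vstar - v j‖
          = Finset.univ.sup' Finset.univ_nonempty fun i => ‖vstar - v i‖}) ∧
      (gradient (fun w : EuclideanSpace ℝ (Fin d) => ‖w‖ ^ 2 / 2) vstar ∈
        convexHull ℝ (v '' {j | -(‖v j‖ ^ 2 / 2) + ⟪v j, vstar⟫_ℝ
          = Finset.univ.inf' Finset.univ_nonempty
              fun i => -(‖v i‖ ^ 2 / 2) + ⟪v i, vstar⟫_ℝ})) ∧
      (∀ w, gradient (fun w : EuclideanSpace ℝ (Fin d) => ‖w‖ ^ 2 / 2) w ∈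
        convexHull ℝ (v '' {j | -(‖v j‖ ^ 2 / 2) + ⟪v j, w⟫_ℝ
          = Finset.univ.inf' Finset.univ_nonempty
              fun i => -(‖v i‖ ^ 2 / 2) + ⟪v i, w⟫_ℝ}) → w = vstar) := by
  obtain ⟨vstar, hmin⟩ := exists_forall_maxDist_le v
  have hhull := mem_convexHull_farthest_of_forall_maxDist_le hmin
  simp only [sup'_norm_sub_sq, gradient_half_norm_sq, setOf_eq_inf'_eq_farthest]
  refine ⟨vstar, fun w => ?_, fun w hw => eq_of_mem_convexHull_farthest hhull (hw vstar),
    fun c ρ hc => (hmin c).trans (maxDist_le_of_forall_mem_closedBall hc), hhull, hhull,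
    fun w hw => (eq_of_mem_convexHull_farthest hw ?_).symm⟩
  all_goals exact pow_le_pow_left₀ (maxDist_nonneg v vstar) (hmin w) 2
end

section
/- Existence of a strictly convex Hamiltonian with prescribed values and gradients: let p_i ∈ ℝ^d, i ∈ 𝕀 (𝕀 finite nonempty), be pairwise distinct, and let H_i ∈ ℝ and v_i ∈ ℝ^d satisfy −⟨v_i, p_i⟩ + H_i < −⟨v_i, p_j⟩ + H_j for all i ≠ j. Then there exists a differentiable strictly convex function H : ℝ^d → ℝ such that H(p_i) = H_i and ∇H(p_i) = v_i for every i ∈ 𝕀. -/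
/-!
Each datum `(p i, Hval i, v i)` is matched by the paraboloid
`x ↦ Hval i + ⟪v i, x - p i⟫ + ε ‖x - p i‖ ^ 2`, which is strictly convex and has the
prescribed value and gradient at `p i`. The separation hypothesis says that the `i`-th affine
part strictly dominates all others at `p i`, so for small `ε` the `i`-th paraboloid dominates the
others at `p i` by a margin. A smooth maximum of the paraboloids, which agrees with the true
maximum wherever one argument wins by a margin, then coincides with the `i`-th paraboloid near
`p i`. The binary smooth maximum `(a + b + θ (a - b)) / 2`, with `θ` a C¹ convex 1-Lipschitz
smoothing of `|·|`, is monotone, convex and commutes with subtracting constants, so it preserves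
strict convexity.
-/

open scoped InnerProductSpace
open Set Filter Topology

lemma hasDerivAt_max_zero_sq (s : ℝ) : HasDerivAt (fun t => max t 0 ^ 2) (2 * max s 0) s := by
  refine hasDerivAt_of_hasDerivAt_of_ne' (f := fun t : ℝ => max t 0 ^ 2)
    (g := fun t => 2 * max t 0) (x := 0) (fun y hy => ?_) (by fun_prop) (by fun_prop) s
  rcases hy.lt_or_gt with hy | hy
  · have hloc : (fun t : ℝ => max t 0 ^ 2) =ᶠ[𝓝 y] fun _ => 0 := by
      filter_upwards [Iio_mem_nhds hy] with t ht
      rw [max_eq_right (le_of_lt ht), zero_pow two_ne_zero]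
    simpa [max_eq_right hy.le] using (hasDerivAt_const y (0 : ℝ)).congr_of_eventuallyEq hloc
  · have hloc : (fun t : ℝ => max t 0 ^ 2) =ᶠ[𝓝 y] fun t => t ^ 2 := by
      filter_upwards [Ioi_mem_nhds hy] with t ht
      rw [max_eq_left (le_of_lt ht)]
    simpa [max_eq_left hy.le] using (hasDerivAt_pow 2 y).congr_of_eventuallyEq hloc

/-- The Huber function: `t ^ 2 / (2 * δ) + δ / 2` on `[-δ, δ]` and `|t|` outside. -/
noncomputable def smoothAbs (δ t : ℝ) : ℝ :=
  (t ^ 2 + δ ^ 2 - max (t - δ) 0 ^ 2 - max (-t - δ) 0 ^ 2) / (2 * δ)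

section smoothAbs

variable {δ : ℝ}

lemma hasDerivAt_smoothAbs (hδ : 0 < δ) (t : ℝ) :
    HasDerivAt (smoothAbs δ) (max (min t δ) (-δ) / δ) t := by
  have h := ((((hasDerivAt_pow 2 t).add_const (δ ^ 2)).sub
    ((hasDerivAt_max_zero_sq (t - δ)).comp t ((hasDerivAt_id t).sub_const δ))).sub
    ((hasDerivAt_max_zero_sq (-t - δ)).comp t ((hasDerivAt_id t).neg.sub_const δ))).div_const
    (2 * δ)
  refine h.congr_deriv ?_
  rcases le_total t (-δ) with h₁ | h₁
  · rw [max_eq_right (by linarith : t - δ ≤ 0), max_eq_left (by linarith : 0 ≤ -t - δ),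
      min_eq_left (by linarith), max_eq_right h₁]
    field_simp; ring
  rcases le_total t δ with h₂ | h₂
  · rw [max_eq_right (by linarith : t - δ ≤ 0), max_eq_right (by linarith : -t - δ ≤ 0),
      min_eq_left h₂, max_eq_left h₁]
    field_simp; ring
  · rw [max_eq_left (by linarith : 0 ≤ t - δ), max_eq_right (by linarith : -t - δ ≤ 0),
      min_eq_right h₂, max_eq_left (by linarith)]
    field_simp; ring

lemma differentiable_smoothAbs (hδ : 0 < δ) : Differentiable ℝ (smoothAbs δ) :=
  fun t => (hasDerivAt_smoothAbs hδ t).differentiableAt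

lemma convexOn_smoothAbs (hδ : 0 < δ) : ConvexOn ℝ univ (smoothAbs δ) := by
  refine Monotone.convexOn_univ_of_deriv (differentiable_smoothAbs hδ) fun a b hab => ?_
  simp only [(hasDerivAt_smoothAbs hδ _).deriv]
  gcongr

lemma lipschitzWith_one_smoothAbs (hδ : 0 < δ) : LipschitzWith 1 (smoothAbs δ) := by
  refine lipschitzWith_of_nnnorm_deriv_le (differentiable_smoothAbs hδ) fun t => ?_
  rw [(hasDerivAt_smoothAbs hδ t).deriv, ← NNReal.coe_le_coe, coe_nnnorm, Real.norm_eq_abs,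
    abs_div, abs_of_pos hδ, NNReal.coe_one, div_le_one hδ, abs_le]
  exact ⟨le_max_right _ _, max_le (min_le_right _ _) (by linarith)⟩

lemma smoothAbs_eq_abs (hδ : 0 < δ) {t : ℝ} (ht : δ ≤ |t|) : smoothAbs δ t = |t| := by
  rcases le_abs'.1 ht with h | h
  · rw [smoothAbs, max_eq_right (by linarith : t - δ ≤ 0),
      max_eq_left (by linarith : 0 ≤ -t - δ), abs_of_neg (by linarith)]
    field_simp; ring
  · rw [smoothAbs, max_eq_left (by linarith : 0 ≤ t - δ),
      max_eq_right (by linarith : -t - δ ≤ 0), abs_of_pos (by linarith)]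
    field_simp; ring

lemma smoothAbs_le (hδ : 0 < δ) (t : ℝ) : smoothAbs δ t ≤ |t| + δ := by
  rcases le_or_gt δ |t| with h | h
  · rw [smoothAbs_eq_abs hδ h]; linarith
  obtain ⟨h₁, h₂⟩ := abs_lt.1 h
  rw [smoothAbs, max_eq_right (by linarith : t - δ ≤ 0), max_eq_right (by linarith : -t - δ ≤ 0),
    div_le_iff₀ (by positivity)]
  nlinarith [abs_nonneg t]

end smoothAbs

noncomputable def smoothMax (δ a b : ℝ) : ℝ := (a + b + smoothAbs δ (a - b)) / 2

section smoothMax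

variable {δ : ℝ}

lemma smoothMax_eq_left (hδ : 0 < δ) {a b : ℝ} (h : b + δ ≤ a) : smoothMax δ a b = a := by
  rw [smoothMax, smoothAbs_eq_abs hδ (by rw [abs_of_nonneg (by linarith)]; linarith),
    abs_of_nonneg (by linarith)]
  ring

lemma smoothMax_eq_right (hδ : 0 < δ) {a b : ℝ} (h : a + δ ≤ b) : smoothMax δ a b = b := by
  rw [smoothMax, smoothAbs_eq_abs hδ (by rw [abs_of_nonpos (by linarith)]; linarith),
    abs_of_nonpos (by linarith)]
  ring

lemma smoothMax_le (hδ : 0 < δ) {a b c : ℝ} (ha : a ≤ c) (hb : b ≤ c) :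
    smoothMax δ a b ≤ c + δ := by
  have := smoothAbs_le hδ (a - b)
  rw [smoothMax, div_le_iff₀ two_pos]
  cases abs_cases (a - b) <;> linarith

lemma smoothMax_le_smoothMax (hδ : 0 < δ) {a a' b b' : ℝ} (ha : a ≤ a') (hb : b ≤ b') :
    smoothMax δ a b ≤ smoothMax δ a' b' := by
  have h := (lipschitzWith_one_smoothAbs hδ).dist_le_mul (a - b) (a' - b')
  rw [NNReal.coe_one, one_mul, Real.dist_eq, Real.dist_eq, abs_le] at h
  rw [smoothMax, smoothMax]
  cases abs_cases (a - b - (a' - b')) <;> linarith [h.1]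

lemma smoothMax_sub_sub (a b s : ℝ) : smoothMax δ (a - s) (b - s) = smoothMax δ a b - s := by
  rw [smoothMax, smoothMax, sub_sub_sub_cancel_right]
  ring

lemma convexOn_smoothMax (hδ : 0 < δ) :
    ConvexOn ℝ univ fun q : ℝ × ℝ => smoothMax δ q.1 q.2 := by
  refine ⟨convex_univ, fun x _ y _ a b ha hb hab => ?_⟩
  have h := (convexOn_smoothAbs hδ).2 (mem_univ (x.1 - x.2)) (mem_univ (y.1 - y.2)) ha hb hab
  simp only [smoothMax, Prod.fst_add, Prod.snd_add, Prod.smul_fst, Prod.smul_snd,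
    smul_eq_mul] at h ⊢
  have e : a * x.1 + b * y.1 - (a * x.2 + b * y.2) = a * (x.1 - x.2) + b * (y.1 - y.2) := by ring
  rw [e]
  nlinarith

end smoothMax

section Composition

variable {E : Type*}

lemma StrictConvexOn.smoothMax [AddCommGroup E] [Module ℝ E] {δ : ℝ} (hδ : 0 < δ) {s : Set E}
    {f g : E → ℝ} (hf : StrictConvexOn ℝ s f) (hg : StrictConvexOn ℝ s g) :
    StrictConvexOn ℝ s fun x => smoothMax δ (f x) (g x) := by
  refine ⟨hf.1, fun x hx y hy hxy a b ha hb hab => ?_⟩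
  set z := a • x + b • y
  have hfz := hf.2 hx hy hxy ha hb hab
  have hgz := hg.2 hx hy hxy ha hb hab
  set F := a • f x + b • f y
  set G := a • g x + b • g y
  set m := min (F - f z) (G - g z)
  have hm : 0 < m := lt_min (by linarith) (by linarith)
  calc _root_.smoothMax δ (f z) (g z) ≤ _root_.smoothMax δ (F - m) (G - m) :=
        smoothMax_le_smoothMax hδ (by linarith [min_le_left (F - f z) (G - g z)])
          (by linarith [min_le_right (F - f z) (G - g z)])
    _ = _root_.smoothMax δ F G - m := smoothMax_sub_sub F G m
    _ < _root_.smoothMax δ F G := by linarith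
    _ ≤ a • _root_.smoothMax δ (f x) (g x) + b • _root_.smoothMax δ (f y) (g y) :=
        (convexOn_smoothMax hδ).2 (mem_univ (f x, g x)) (mem_univ (f y, g y)) ha.le hb.le hab

lemma Differentiable.smoothMax [NormedAddCommGroup E] [NormedSpace ℝ E] {δ : ℝ} (hδ : 0 < δ)
    {f g : E → ℝ} (hf : Differentiable ℝ f) (hg : Differentiable ℝ g) :
    Differentiable ℝ fun x => smoothMax δ (f x) (g x) := by
  have := differentiable_smoothAbs hδ
  unfold _root_.smoothMax
  fun_prop

end Composition

section FiniteSmoothMax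

variable {ι E : Type*} [NormedAddCommGroup E] [NormedSpace ℝ E] {S : Set E} {f : ι → E → ℝ}
  {δ : ℝ}

theorem exists_smoothMax_finset (hδ : 0 < δ) (hd : ∀ i, Differentiable ℝ (f i))
    (hc : ∀ i, StrictConvexOn ℝ S (f i)) {s : Finset ι} (hs : s.Nonempty) :
    ∃ F : E → ℝ, Differentiable ℝ F ∧ StrictConvexOn ℝ S F ∧
      (∀ x b, (∀ k ∈ s, f k x ≤ b) → F x ≤ b + s.card * δ) ∧
      ∀ x, ∀ j ∈ s, (∀ k ∈ s, k ≠ j → f k x + s.card * δ ≤ f j x) → F x = f j x := by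
  induction hs using Finset.Nonempty.cons_induction with
  | singleton i =>
    refine ⟨f i, hd i, hc i, fun x b hb => ?_, fun x j hj _ => ?_⟩
    · simp only [Finset.mem_singleton, forall_eq] at hb
      simp only [Finset.card_singleton, Nat.cast_one, one_mul]
      linarith
    · rw [Finset.mem_singleton.1 hj]
  | cons i s hi hs ih =>
    obtain ⟨G, hGd, hGc, hG_le, hG_eq⟩ := ih
    have hsδ : 0 ≤ (s.card : ℝ) * δ := by positivity
    refine ⟨fun x => smoothMax δ (f i x) (G x), (hd i).smoothMax hδ hGd, (hc i).smoothMax hδ hGc,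
      fun x b hb => ?_, fun x j hj hmargin => ?_⟩
    · simp only [Finset.mem_cons, forall_eq_or_imp] at hb
      rw [Finset.card_cons, Nat.cast_succ, add_mul, one_mul, ← add_assoc]
      exact smoothMax_le hδ (by linarith [hb.1]) (hG_le x b hb.2)
    · simp only [Finset.card_cons, Nat.cast_succ, Finset.mem_cons, forall_eq_or_imp] at hmargin hj
      rcases hj with rfl | hj
      · have : G x ≤ f j x - δ := by
          have := hG_le x (f j x - (s.card + 1) * δ) fun k hk =>
            by linarith [hmargin.2 k hk (fun h => hi (h ▸ hk))]
          linarith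
        exact smoothMax_eq_left hδ (by linarith)
      · have hij : i ≠ j := fun h => hi (h ▸ hj)
        show smoothMax δ (f i x) (G x) = f j x
        rw [hG_eq x j hj fun k hk hkj => by linarith [hmargin.2 k hk hkj]]
        exact smoothMax_eq_right hδ (by linarith [hmargin.1 hij])

end FiniteSmoothMax

theorem exists_smoothMax_eventuallyEq {ι E : Type*} [Fintype ι] [Nonempty ι]
    [NormedAddCommGroup E] [NormedSpace ℝ E] {S : Set E} {f : ι → E → ℝ} {δ : ℝ} (hδ : 0 < δ)
    (hd : ∀ i, Differentiable ℝ (f i)) (hc : ∀ i, StrictConvexOn ℝ S (f i)) :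
    ∃ F : E → ℝ, Differentiable ℝ F ∧ StrictConvexOn ℝ S F ∧
      ∀ x j, (∀ k, k ≠ j → f k x + Fintype.card ι * δ < f j x) → F =ᶠ[𝓝 x] f j := by
  obtain ⟨F, hFd, hFc, -, hF_eq⟩ := exists_smoothMax_finset hδ hd hc Finset.univ_nonempty
  refine ⟨F, hFd, hFc, fun x j hx => ?_⟩
  have hnear : ∀ᶠ y in 𝓝 x, ∀ k, k ≠ j → f k y + Fintype.card ι * δ < f j y :=
    eventually_all.2 fun k => by
      by_cases hkj : k = j
      · exact .of_forall fun _ h => absurd hkj h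
      · exact (((hd k).continuous.add continuous_const).continuousAt.eventually_lt
          (hd j).continuous.continuousAt (hx k hkj)).mono fun _ h _ => h
  filter_upwards [hnear] with y hy
  exact hF_eq y j (Finset.mem_univ j) fun k _ hkj => (hy k hkj).le

noncomputable def paraboloid {E : Type*} [NormedAddCommGroup E] [InnerProductSpace ℝ E]
    (q v : E) (a ε : ℝ) (x : E) : ℝ :=
  a + ⟪v, x - q⟫_ℝ + ε * ‖x - q‖ ^ 2

section Paraboloid

variable {E : Type*} [NormedAddCommGroup E] [InnerProductSpace ℝ E] (q v : E) (a ε : ℝ)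

@[simp]
lemma paraboloid_self : paraboloid q v a ε q = a := by
  simp [paraboloid]

lemma differentiable_paraboloid : Differentiable ℝ (paraboloid q v a ε) := by
  have hsub : Differentiable ℝ fun x : E => x - q := differentiable_id.sub_const q
  exact ((differentiable_const a).add ((differentiable_const v).inner ℝ hsub)).add
    ((hsub.norm_sq ℝ).const_mul ε)

lemma hasGradientAt_paraboloid_self [CompleteSpace E] :
    HasGradientAt (paraboloid q v a ε) v q := by
  rw [hasGradientAt_iff_hasFDerivAt]
  have h := ((((InnerProductSpace.toDual ℝ E v).hasFDerivAt.sub_const ⟪v, q⟫_ℝ).const_add a).add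
    (((hasFDerivAt_id q).sub_const q).norm_sq.const_mul ε))
  refine (h.congr_fderiv ?_).congr_of_eventuallyEq (.of_forall fun x => ?_)
  · ext; simp
  · simp [paraboloid, inner_sub_right]

lemma strictConvexOn_paraboloid {ε : ℝ} (hε : 0 < ε) :
    StrictConvexOn ℝ univ (paraboloid q v a ε) := by
  refine (StrongConvexOn.strictConvexOn (m := 2 * ε) ?_ (by positivity))
  rw [strongConvexOn_iff_convex]
  have e : (fun x => paraboloid q v a ε x - 2 * ε / 2 * ‖x‖ ^ 2) =
      fun x => ⟪v - (2 * ε) • q, x⟫_ℝ + (a - ⟪v, q⟫_ℝ + ε * ‖q‖ ^ 2) := by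
    ext x
    simp only [paraboloid, norm_sub_sq_real, inner_sub_left, inner_sub_right,
      real_inner_smul_left, real_inner_comm q]
    ring
  rw [e]
  exact ((innerₗ E (v - (2 * ε) • q)).convexOn convex_univ).add_const _

end Paraboloid

lemma exists_pos_forall_mul_lt {κ : Type*} [Finite κ] (c : κ → ℝ) {g : κ → ℝ}
    (hg : ∀ i, 0 < g i) : ∃ ε > 0, ∀ i, ε * c i < g i := by
  have h : ∀ᶠ ε in 𝓝[>] (0 : ℝ), ∀ i, ε * c i < g i := eventually_all.2 fun i =>
    nhdsWithin_le_nhds <| ((continuous_id.mul continuous_const).tendsto' 0 0 (zero_mul _))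
      |>.eventually_lt_const (hg i)
  exact (h.and self_mem_nhdsWithin).exists.imp fun ε h => ⟨h.2, h.1⟩

theorem exists_strictConvex_hamiltonian_with_prescribed_data_general {d : ℕ}
    {ι : Type} [Fintype ι] [Nonempty ι]
    (p : ι → EuclideanSpace ℝ (Fin d))
    (Hval : ι → ℝ) (v : ι → EuclideanSpace ℝ (Fin d))
    (hsep : ∀ i j, i ≠ j →
      -⟪v i, p i⟫_ℝ + Hval i < -⟪v i, p j⟫_ℝ + Hval j) :
    ∃ H : EuclideanSpace ℝ (Fin d) → ℝ,
      Differentiable ℝ H ∧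
      StrictConvexOn ℝ Set.univ H ∧
      (∀ i, H (p i) = Hval i) ∧
      (∀ i, gradient H (p i) = v i) := by
  -- `ε` serves both as the curvature of the paraboloids and as the smoothing width of the maximum.
  obtain ⟨ε, hε, hmargin⟩ := exists_pos_forall_mul_lt
    (fun jk : {jk : ι × ι // jk.2 ≠ jk.1} => ‖p jk.1.1 - p jk.1.2‖ ^ 2 + Fintype.card ι)
    (g := fun jk => Hval jk.1.1 - Hval jk.1.2 - ⟪v jk.1.2, p jk.1.1 - p jk.1.2⟫_ℝ)
    fun ⟨(j, k), hkj⟩ => by linarith [inner_sub_right (𝕜 := ℝ) (v k) (p j) (p k), hsep k j hkj]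
  set f := fun i => paraboloid (p i) (v i) (Hval i) ε
  obtain ⟨H, hHd, hHc, hH_loc⟩ := exists_smoothMax_eventuallyEq (f := f) hε
    (fun i => differentiable_paraboloid _ _ _ _) fun i => strictConvexOn_paraboloid _ _ _ hε
  have hH : ∀ j, H =ᶠ[𝓝 (p j)] f j := fun j => hH_loc (p j) j fun k hkj => by
    have := hmargin ⟨(j, k), hkj⟩
    simp only [f, paraboloid_self, paraboloid] at this ⊢
    linarith
  refine ⟨H, hHd, hHc, fun j => (hH j).eq_of_nhds.trans (paraboloid_self ..), fun j => ?_⟩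
  exact ((hasGradientAt_paraboloid_self ..).congr_of_eventuallyEq (hH j)).gradient

/-- Existence of a differentiable strictly convex Hamiltonian with prescribed values
`H(p_i) = H_i` and gradients `∇H(p_i) = v_i`, given pairwise distinct momenta `p_i` and
the strict support conditions `−⟨v_i, p_i⟩ + H_i < −⟨v_i, p_j⟩ + H_j` for `i ≠ j`. -/
theorem exists_strictConvex_hamiltonian_with_prescribed_data {d : ℕ}
    {ι : Type} [Fintype ι] [Nonempty ι]
    (p : ι → EuclideanSpace ℝ (Fin d)) (hp : Function.Injective p)
    (Hval : ι → ℝ) (v : ι → EuclideanSpace ℝ (Fin d))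
    (hsep : ∀ i j, i ≠ j →
      -⟪v i, p i⟫_ℝ + Hval i < -⟪v i, p j⟫_ℝ + Hval j) :
    ∃ H : EuclideanSpace ℝ (Fin d) → ℝ,
      Differentiable ℝ H ∧
      StrictConvexOn ℝ Set.univ H ∧
      (∀ i, H (p i) = Hval i) ∧
      (∀ i, gradient H (p i) = v i) :=
  exists_strictConvex_hamiltonian_with_prescribed_data_general p Hval v hsep
end
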